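/- arXiv:2605.26916 — 11 statements merged into one kernel-verified Lean document; each statement's English description precedes it below -/
import Mathlib

section
/- The poset P_τ of lattice points of a preorder polytope Q_τ is graded with rank function given by the sum of coordinates: whenever a covers b in P_τ (with the componentwise order), the sum of the coordinates of a exceeds that of b by exactly 1. -/
/-! The lattice points of `Q_τ` form a lower set of `ℕ^E`, since the constraints only bound sums of
nonnegative coordinates from above. Hence a cover in `P_τ` is a cover in `ℕ^E`, which raises a
single coordinate by one. -/

def IsOrderIdeal {E : Type*} (r : E → E → Prop) (I : Finset E) : Prop :=
  ∀ a b : E, r a b → b ∈ I → a ∈ I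

def preorderPolytope (E : Type*) [Fintype E] (r : E → E → Prop) : Set (E → ℝ) :=
  {x | (∀ e, 0 ≤ x e) ∧
    ∀ I : Finset E, IsOrderIdeal r I → ∑ e ∈ I, x e ≤ (I.card : ℝ)}

def latticePoints (E : Type*) [Fintype E] (r : E → E → Prop) : Set (E → ℕ) :=
  {a | (fun e => (a e : ℝ)) ∈ preorderPolytope E r}

open Finset

theorem IsLowerSet.covBy_of_not_exists_mem_between {α : Type*} [Preorder α] {s : Set α}
    (hs : IsLowerSet s) {a b : α} (ha : a ∈ s) (hba : b < a)
    (hbetween : ¬ ∃ c ∈ s, b < c ∧ c < a) : b ⋖ a :=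
  ⟨hba, fun c hbc hca => hbetween ⟨c, hs hca.le ha, hbc, hca⟩⟩

theorem Pi.sum_eq_sum_add_one_of_covBy {ι : Type*} [Fintype ι] {a b : ι → ℕ} (h : b ⋖ a) :
    ∑ i, a i = ∑ i, b i + 1 := by
  classical
  obtain ⟨i, x, hx, rfl⟩ := Pi.covBy_iff_exists_right_eq.1 h
  rw [Nat.covBy_iff_add_one_eq] at hx
  rw [sum_update_of_mem (mem_univ i), ← add_sum_erase _ b (mem_univ i),
    sdiff_singleton_eq_erase, ← hx]
  ring

theorem isLowerSet_latticePoints (E : Type*) [Fintype E] (r : E → E → Prop) :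
    IsLowerSet (latticePoints E r) := by
  intro a c hca ha
  refine ⟨fun e => Nat.cast_nonneg _, fun I hI => ?_⟩
  calc ∑ e ∈ I, (c e : ℝ) ≤ ∑ e ∈ I, (a e : ℝ) :=
        sum_le_sum fun e _ => Nat.cast_le.2 (hca e)
    _ ≤ I.card := ha.2 I hI

theorem latticePoints_graded_general (E : Type*) [Fintype E]
    (r : E → E → Prop)
    (a b : E → ℕ) (ha : a ∈ latticePoints E r)
    (hcov : b < a ∧ ¬ ∃ c ∈ latticePoints E r, b < c ∧ c < a) :
    ∑ e : E, a e = (∑ e : E, b e) + 1 :=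
  Pi.sum_eq_sum_add_one_of_covBy <|
    (isLowerSet_latticePoints E r).covBy_of_not_exists_mem_between ha hcov.1 hcov.2

/-- the poset of lattice points of the preorder polytope is graded
with rank the sum of coordinates: if `a` covers `b` (in the componentwise order
restricted to the lattice points), then `∑ a = ∑ b + 1`. -/
theorem latticePoints_graded (E : Type*) [Fintype E]
    (r : E → E → Prop) (hrefl : ∀ a, r a a) (htrans : ∀ a b c, r a b → r b c → r a c)
    (a b : E → ℕ) (ha : a ∈ latticePoints E r) (hb : b ∈ latticePoints E r)
    (hcov : b < a ∧ ¬ ∃ c ∈ latticePoints E r, b < c ∧ c < a) :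
    ∑ e : E, a e = (∑ e : E, b e) + 1 :=
  latticePoints_graded_general E r a b ha hcov
end

section
/- Translation by the all-ones vector (1,1,…,1) gives a bijection between the set of lattice points of Q_τ lying in no defining hyperplane Σ_{e∈I} x_e = |I| (for I a nonempty order ideal of τ) and the set of lattice points in the interior of the dilate 2Q_τ. Consequently the number of interior lattice points of 2Q_τ equals the number of lattice points of Q_τ not on the upper boundary. -/
/-- Lattice points of `Q_τ` lying on no defining hyperplane
`∑_{e ∈ I} x_e = |I|` (`I` a nonempty order ideal). -/
def notUpperBoundaryPoints (E : Type*) [Fintype E] (r : E → E → Prop) : Set (E → ℕ) :=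
  {a | (fun e => (a e : ℝ)) ∈ preorderPolytope E r ∧
    ∀ I : Finset E, I.Nonempty → IsOrderIdeal r I → ∑ e ∈ I, a e < I.card}

/-- Interior lattice points of the dilate `2 Q_τ`: all defining inequalities
are satisfied strictly. -/
def interiorPointsTwice (E : Type*) [Fintype E] (r : E → E → Prop) : Set (E → ℕ) :=
  {a | (∀ e, 0 < a e) ∧
    ∀ I : Finset E, I.Nonempty → IsOrderIdeal r I → ∑ e ∈ I, a e < 2 * I.card}

section

variable {E : Type*} [Fintype E] {r : E → E → Prop}

theorem mem_notUpperBoundaryPoints_iff {a : E → ℕ} :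
    a ∈ notUpperBoundaryPoints E r ↔
      ∀ I : Finset E, I.Nonempty → IsOrderIdeal r I → ∑ e ∈ I, a e < I.card := by
  refine ⟨And.right, fun h => ⟨⟨fun e => Nat.cast_nonneg _, fun I hI => ?_⟩, h⟩⟩
  rcases I.eq_empty_or_nonempty with rfl | hne
  · simp
  · simpa only [Nat.cast_sum] using (Nat.cast_le (α := ℝ)).2 (h I hne hI).le

theorem add_one_mem_interiorPointsTwice_iff {a : E → ℕ} :
    (fun e => a e + 1) ∈ interiorPointsTwice E r ↔ a ∈ notUpperBoundaryPoints E r := by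
  simp only [interiorPointsTwice, mem_notUpperBoundaryPoints_iff, Set.mem_ofPred_eq,
    Nat.succ_pos, implies_true, true_and, Finset.sum_add_distrib, Finset.sum_const, smul_eq_mul,
    mul_one]
  exact forall₃_congr fun I _ _ => by omega

end

theorem translation_bijOn_interior_general (E : Type*) [Fintype E]
    (r : E → E → Prop) :
    Set.BijOn (fun (a : E → ℕ) (e : E) => a e + 1)
      (notUpperBoundaryPoints E r) (interiorPointsTwice E r) ∧
    (interiorPointsTwice E r).ncard = (notUpperBoundaryPoints E r).ncard := by
  have hbij : Set.BijOn (fun (a : E → ℕ) (e : E) => a e + 1)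
      (notUpperBoundaryPoints E r) (interiorPointsTwice E r) := by
    refine ⟨fun a ha => add_one_mem_interiorPointsTwice_iff.2 ha,
      (add_left_injective (1 : E → ℕ)).injOn, fun b hb => ?_⟩
    have hb_eq : (fun e => b e - 1 + 1) = b := funext fun e => Nat.sub_add_cancel (hb.1 e)
    exact ⟨fun e => b e - 1, add_one_mem_interiorPointsTwice_iff.1 (hb_eq ▸ hb), hb_eq⟩
  exact ⟨hbij, hbij.ncard_eq.symm⟩

/-- translation by the all-ones vector is a bijection from the
set of lattice points of `Q_τ` on no defining hyperplane onto the set of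
interior lattice points of `2 Q_τ`; consequently the two sets have the same
cardinality. -/
theorem translation_bijOn_interior (E : Type*) [Fintype E]
    (r : E → E → Prop) (hrefl : ∀ a, r a a) (htrans : ∀ a b c, r a b → r b c → r a c) :
    Set.BijOn (fun (a : E → ℕ) (e : E) => a e + 1)
      (notUpperBoundaryPoints E r) (interiorPointsTwice E r) ∧
    (interiorPointsTwice E r).ncard = (notUpperBoundaryPoints E r).ncard :=
  translation_bijOn_interior_general E r
end

section
/- Let τ be a preorder on an n-element set E and let τ* be its dual (the reverse preorder). For every m ≥ 1, the number of multichains p₁ ≤ p₂ ≤ ⋯ ≤ p_m in the poset P_{τ*} of lattice points of Q_{τ*} equals Σ_{(a_e) ∈ P_{τ*}} Π_{e∈E} C(m + a_e − 1, a_e), where the sum is over lattice points of Q_{τ*}. -/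
/-!
A multichain `p₁ ≤ ⋯ ≤ p_m` in `P_{τ*}` is determined by its top `a = p_m ∈ P_{τ*}`, and since
`P_{τ*}` is a lower set of `ℕ^E`, every multichain of `ℕ^E` ending at `a` stays in `P_{τ*}`.
Such multichains split coordinatewise into multichains of `ℕ` ending at `a_e`; conditioning on
the second-to-last entry and the hockey-stick identity show there are `C(a_e + m - 1, m - 1)`
of those.
-/

theorem natCast_mem_preorderPolytope_of_le {E : Type*} [Fintype E] {r : E → E → Prop}
    {a b : E → ℕ} (hba : b ≤ a) (ha : (fun e => (a e : ℝ)) ∈ preorderPolytope E r) :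
    (fun e => (b e : ℝ)) ∈ preorderPolytope E r := by
  refine ⟨fun e => Nat.cast_nonneg _, fun I hI => le_trans ?_ (ha.2 I hI)⟩
  exact Finset.sum_le_sum fun e _ => Nat.cast_le.mpr (hba e)

abbrev MultichainTo {α : Type*} [Preorder α] (k : ℕ) (a : α) : Type _ :=
  {p : Fin (k + 1) → α // Monotone p ∧ p (Fin.last k) = a}

def multichainToPiEquiv {ι : Type*} {β : ι → Type*} [∀ i, Preorder (β i)] (k : ℕ)
    (a : ∀ i, β i) : MultichainTo k a ≃ ∀ i, MultichainTo k (a i) where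
  toFun p i := ⟨fun j => p.1 j i, fun _ _ hjl => p.2.1 hjl i, congrFun p.2.2 i⟩
  invFun q := ⟨fun j i => (q i).1 j, fun _ _ hjl i => (q i).2.1 hjl, funext fun i => (q i).2.2⟩
  left_inv _ := rfl
  right_inv _ := rfl

section Multichain

variable {α : Type*} [Preorder α]

instance [LocallyFiniteOrderBot α] (k : ℕ) (a : α) : Finite (MultichainTo k a) :=
  Set.Finite.to_subtype <| (Set.Finite.pi fun _ => Set.finite_Iic a).subset
    fun _ hp i _ => hp.2 ▸ hp.1 (Fin.le_last i)

def multichainToSuccEquiv (k : ℕ) (a : α) :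
    MultichainTo (k + 1) a ≃ Σ c : Set.Iic a, MultichainTo k (c : α) where
  toFun p := ⟨⟨p.1 (Fin.last k).castSucc, (p.2.1 (Fin.le_last _)).trans_eq p.2.2⟩,
    Fin.init p.1, fun _ _ hjl => p.2.1 (Fin.castSucc_le_castSucc_iff.mpr hjl), rfl⟩
  invFun q := ⟨Fin.snoc q.2.1 a, by
    rw [Fin.monotone_iff_le_succ]
    intro j
    induction j using Fin.lastCases with
    | last =>
      rw [Fin.succ_last, Fin.snoc_castSucc, Fin.snoc_last, q.2.2.2]
      exact q.1.2
    | cast j =>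
      rw [Fin.succ_castSucc, Fin.snoc_castSucc, Fin.snoc_castSucc]
      exact q.2.2.1 j.castSucc_le_succ, Fin.snoc_last _ _⟩
  left_inv p := by
    ext1
    conv_rhs => rw [← Fin.snoc_init_self p.1, p.2.2]
  right_inv q :=
    Sigma.subtype_ext (Subtype.ext ((Fin.snoc_castSucc (α := fun _ => α) ..).trans q.2.2.2))
      (Fin.init_snoc (α := fun _ => α) ..)

def multichainsEquivSigma {s : Set α} (hs : IsLowerSet s) (k : ℕ) :
    {p : Fin (k + 1) → α // (∀ i, p i ∈ s) ∧ Monotone p} ≃ Σ a : s, MultichainTo k (a : α) where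
  toFun p := ⟨⟨p.1 (Fin.last k), p.2.1 _⟩, p.1, p.2.2, rfl⟩
  invFun q := ⟨q.2.1, fun i => hs ((q.2.2.1 (Fin.le_last i)).trans_eq q.2.2.2) q.1.2, q.2.2.1⟩
  left_inv _ := rfl
  right_inv q := Sigma.subtype_ext (Subtype.ext q.2.2.2) rfl

end Multichain

theorem card_multichainTo_nat (k b : ℕ) : Nat.card (MultichainTo k b) = (b + k).choose k := by
  induction k generalizing b with
  | zero =>
    rw [Nat.choose_zero_right, Nat.card_eq_one_iff_unique]
    refine ⟨⟨fun p q => Subtype.ext <| funext fun i => ?_⟩, ⟨⟨fun _ => b, monotone_const, rfl⟩⟩⟩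
    rw [Subsingleton.elim (α := Fin 1) i (Fin.last 0), p.2.2, q.2.2]
  | succ k ih =>
    rw [Nat.card_congr (multichainToSuccEquiv k b), Nat.card_sigma]
    simp only [ih]
    rw [← Finset.sum_subtype (Finset.range (b + 1)) (by simp) fun c => (c + k).choose k,
      Nat.sum_range_add_choose, add_assoc]

theorem multichains_card_general (E : Type*) [Fintype E]
    (r : E → E → Prop)
    (P : Finset (E → ℕ))
    (hP : ∀ a : E → ℕ, a ∈ P ↔ (fun e => (a e : ℝ)) ∈ preorderPolytope E (fun a b => r b a))
    (m : ℕ) (hm : 1 ≤ m) :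
    Nat.card {p : Fin m → (E → ℕ) // (∀ i, p i ∈ P) ∧ Monotone p} =
      ∑ a ∈ P, ∏ e : E, (m + a e - 1).choose (a e) := by
  have hP_lower : IsLowerSet (P : Set (E → ℕ)) := fun a b hba ha =>
    (hP b).2 (natCast_mem_preorderPolytope_of_le hba ((hP a).1 ha))
  obtain ⟨k, rfl⟩ := Nat.exists_eq_add_of_le' hm
  have (a : E → ℕ) : Finite (MultichainTo k a) := .of_equiv _ (multichainToPiEquiv k a).symm
  refine (Nat.card_congr (multichainsEquivSigma hP_lower k)).trans ?_
  rw [Nat.card_sigma, ← Finset.sum_coe_sort P]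
  refine Fintype.sum_congr _ _ fun a => ?_
  rw [Nat.card_congr (multichainToPiEquiv k _), Nat.card_pi]
  refine Fintype.prod_congr _ _ fun e => ?_
  rw [card_multichainTo_nat, ← Nat.choose_symm_add]
  congr 1
  omega

/-- for `m ≥ 1`, the number of `m`-multichains
`p₁ ≤ ⋯ ≤ p_m` in the poset `P_{τ*}` of lattice points of the polytope of the
dual preorder `τ*` equals `∑_{a ∈ P_{τ*}} ∏_e C(m + a_e − 1, a_e)`.
Here `P` is a finset enumerating the lattice points of `Q_{τ*}`. -/
theorem multichains_card (E : Type*) [Fintype E] [DecidableEq E]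
    (r : E → E → Prop) (hrefl : ∀ a, r a a) (htrans : ∀ a b c, r a b → r b c → r a c)
    (P : Finset (E → ℕ))
    (hP : ∀ a : E → ℕ, a ∈ P ↔ (fun e => (a e : ℝ)) ∈ preorderPolytope E (fun a b => r b a))
    (m : ℕ) (hm : 1 ≤ m) :
    Nat.card {p : Fin m → (E → ℕ) // (∀ i, p i ∈ P) ∧ Monotone p} =
      ∑ a ∈ P, ∏ e : E, (m + a e - 1).choose (a e) :=
  multichains_card_general E r P hP m hm
end

section
/- Let τ be a preorder on an n-element set E. The maximal chains of the poset P_{τ*} of lattice points of Q_{τ*} (which all have length n) are in bijection with the words w ∈ E^n such that for every order ideal I of τ, the elements of I appear a total of at least |I| times in w. The bijection sends a maximal chain to the word recording, at each covering step, the unique coordinate that increases. -/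
open Finset

theorem StrictMono.fin_apply_eq_val {n : ℕ} {f : Fin (n + 1) → ℕ} (hf : StrictMono f)
    (hlast : f (Fin.last n) = n) (i : Fin (n + 1)) : f i = i := by
  let g : Fin (n + 1) → Fin (n + 1) := fun i =>
    ⟨f i, Nat.lt_succ_of_le (hlast ▸ hf.monotone (Fin.le_last i))⟩
  have hg : StrictMono g := fun _ _ h => Fin.lt_def.mpr (hf h)
  exact congrArg Fin.val hg.apply_eq

theorem Pi.exists_eq_add_single_of_lt_of_sum_eq_add_one {E : Type*} [Fintype E] [DecidableEq E]
    {a b : E → ℕ} (hab : a < b) (hsum : ∑ e, b e = ∑ e, a e + 1) :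
    ∃ e, b = a + Pi.single e 1 := by
  obtain ⟨hle, e, he⟩ := Pi.lt_def.mp hab
  have hstep : ∀ x ∈ univ, a x + (Pi.single e 1 : E → ℕ) x ≤ b x := by
    intro x _
    rcases eq_or_ne x e with rfl | hx
    · simpa using he
    · simpa [hx] using hle x
  have hsum' : ∑ x, (a x + (Pi.single e 1 : E → ℕ) x) = ∑ x, b x := by
    rw [sum_add_distrib, hsum, sum_pi_single']
    simp
  exact ⟨e, funext fun x => ((sum_eq_sum_iff_of_le hstep).mp hsum' x (mem_univ x)).symm⟩

theorem IsOrderIdeal.compl {E : Type*} [Fintype E] [DecidableEq E] {r : E → E → Prop}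
    {I : Finset E} (hI : IsOrderIdeal r I) : IsOrderIdeal (fun a b => r b a) Iᶜ := by
  intro a b hab hb
  rw [mem_compl] at hb ⊢
  exact fun ha => hb (hI b a hab ha)

theorem mem_latticePoints_iff {E : Type*} [Fintype E] {r : E → E → Prop} {a : E → ℕ} :
    a ∈ latticePoints E r ↔ ∀ I : Finset E, IsOrderIdeal r I → ∑ e ∈ I, a e ≤ #I := by
  simp only [latticePoints, preorderPolytope, Set.mem_ofPred_eq, Nat.cast_nonneg, implies_true,
    true_and]
  exact forall₂_congr fun I _ => by exact_mod_cast Iff.rfl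

theorem mem_latticePoints_of_le {E : Type*} [Fintype E] {r : E → E → Prop} {a b : E → ℕ}
    (hb : b ∈ latticePoints E r) (hab : a ≤ b) : a ∈ latticePoints E r :=
  mem_latticePoints_iff.mpr fun I hI =>
    (sum_le_sum fun e _ => hab e).trans (mem_latticePoints_iff.mp hb I hI)

section PrefixCount

variable {E : Type*} [DecidableEq E] {n : ℕ}

def prefixCount (w : Fin n → E) (i : ℕ) (e : E) : ℕ :=
  #{j : Fin n | (j : ℕ) < i ∧ w j = e}

theorem prefixCount_zero (w : Fin n → E) : prefixCount w 0 = 0 := by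
  ext e
  simp [prefixCount]

theorem prefixCount_succ (w : Fin n → E) (j : Fin n) :
    prefixCount w (j + 1) = prefixCount w j + Pi.single (w j) 1 := by
  ext e
  have hsplit : univ.filter (fun k : Fin n => (k : ℕ) < j + 1 ∧ w k = e) =
      univ.filter (fun k : Fin n => (k : ℕ) < j ∧ w k = e) ∪
        univ.filter (fun k : Fin n => k = j ∧ w k = e) := by
    ext k
    simp only [mem_filter, mem_union, mem_univ, true_and, Nat.lt_succ_iff_lt_or_eq, Fin.ext_iff]
    tauto
  have hdisj : Disjoint (univ.filter fun k : Fin n => (k : ℕ) < j ∧ w k = e)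
      (univ.filter fun k : Fin n => k = j ∧ w k = e) :=
    disjoint_filter.mpr fun k _ hk hk' => (Fin.ne_of_lt hk.1) hk'.1
  have hsingle :
      #(univ.filter fun k : Fin n => k = j ∧ w k = e) = (Pi.single (w j) 1 : E → ℕ) e := by
    rw [← filter_filter, filter_eq', if_pos (mem_univ j), filter_singleton, apply_ite card,
      card_singleton, card_empty, Pi.single_apply]
    exact if_congr eq_comm rfl rfl
  rw [Pi.add_apply, ← hsingle, prefixCount, prefixCount, hsplit, card_union_of_disjoint hdisj]

theorem prefixCount_mono (w : Fin n → E) {i k : ℕ} (hik : i ≤ k) :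
    prefixCount w i ≤ prefixCount w k := fun _ =>
  card_le_card <| monotone_filter_right _ fun _ _ hj => ⟨hj.1.trans_le hik, hj.2⟩

theorem sum_prefixCount_length (w : Fin n → E) (S : Finset E) :
    ∑ e ∈ S, prefixCount w n e = #{j : Fin n | w j ∈ S} := by
  rw [card_eq_sum_card_fiberwise (s := univ.filter fun j => w j ∈ S) (t := S)
    fun j hj => (mem_filter.mp hj).2]
  refine sum_congr rfl fun e he => congrArg card ?_
  ext j
  simp only [mem_filter, mem_univ, true_and, j.isLt]
  exact ⟨fun h => ⟨h ▸ he, h⟩, And.right⟩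

theorem strictMono_prefixCount (w : Fin n → E) :
    StrictMono fun i : Fin (n + 1) => prefixCount w i := by
  refine Fin.strictMono_iff_lt_succ.mpr fun j => ?_
  simp only [Fin.val_castSucc, Fin.val_succ, prefixCount_succ]
  exact lt_add_of_pos_right _ (Pi.single_pos.mpr one_pos)

theorem prefixCount_injective :
    Function.Injective fun (w : Fin n → E) (i : Fin (n + 1)) => prefixCount w i := by
  intro w w' h
  funext j
  have hprev : prefixCount w j = prefixCount w' j := congrFun h j.castSucc
  have hnext := congrFun h j.succ
  simp only [Fin.val_succ, prefixCount_succ, hprev, add_right_inj] at hnext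
  simpa [Pi.single_apply, eq_comm] using congrFun hnext (w j)

theorem exists_prefixCount_eq_of_strictMono [Fintype E] {c : Fin (n + 1) → E → ℕ}
    (hc : StrictMono c) (h0 : c 0 = 0) (hlast : ∑ e, c (Fin.last n) e = n) :
    ∃ w : Fin n → E, ∀ i : Fin (n + 1), prefixCount w i = c i := by
  have hsum : ∀ i, ∑ e, c i e = i :=
    (Fintype.sum_strictMono.comp hc).fin_apply_eq_val hlast
  have hstep : ∀ j : Fin n, ∃ e, c j.succ = c j.castSucc + Pi.single e 1 := fun j =>
    Pi.exists_eq_add_single_of_lt_of_sum_eq_add_one (hc j.castSucc_lt_succ)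
      (by rw [hsum, hsum, Fin.val_succ, Fin.val_castSucc])
  choose w hw using hstep
  refine ⟨w, Fin.induction (by simpa [prefixCount_zero] using h0.symm) fun j ih => ?_⟩
  rw [Fin.val_succ, prefixCount_succ, hw, ← ih, Fin.val_castSucc]

theorem prefixCount_length_mem_latticePoints_iff [Fintype E] {r : E → E → Prop}
    (hn : Fintype.card E = n) (w : Fin n → E) :
    prefixCount w n ∈ latticePoints E (fun a b => r b a) ↔
      ∀ I : Finset E, IsOrderIdeal r I → #I ≤ #{j : Fin n | w j ∈ I} := by
  have hwords : ∀ I : Finset E, #{j : Fin n | w j ∈ Iᶜ} + #{j : Fin n | w j ∈ I} = n := by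
    intro I
    simpa [add_comm] using card_filter_add_card_filter_not (s := univ) (fun j : Fin n => w j ∈ I)
  have hletters : ∀ I : Finset E, #Iᶜ + #I = n := fun I => by rw [card_compl_add_card, hn]
  simp only [mem_latticePoints_iff, sum_prefixCount_length]
  refine ⟨fun h I hI => ?_, fun h J hJ => ?_⟩
  · have := h Iᶜ hI.compl
    have := hwords I
    have := hletters I
    omega
  · have := h Jᶜ hJ.compl
    have := hwords J
    have := hletters J
    omega

end PrefixCount

theorem maximal_chains_words_bijection_general (E : Type*) [Fintype E] [DecidableEq E]
    (r : E → E → Prop) (n : ℕ) (hn : n = Fintype.card E) :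
    Set.BijOn
      (fun (w : Fin n → E) (i : Fin (n + 1)) (e : E) =>
        (Finset.univ.filter (fun j : Fin n => (j : ℕ) < (i : ℕ) ∧ w j = e)).card)
      {w : Fin n → E | ∀ I : Finset E, IsOrderIdeal r I →
        I.card ≤ (Finset.univ.filter (fun i : Fin n => w i ∈ I)).card}
      {c : Fin (n + 1) → (E → ℕ) |
        (∀ i, c i ∈ latticePoints E (fun a b => r b a)) ∧ StrictMono c ∧
          c 0 = 0 ∧ ∑ e : E, c (Fin.last n) e = n} := by
  change Set.BijOn (fun (w : Fin n → E) (i : Fin (n + 1)) => prefixCount w i) _ _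
  refine ⟨fun w hw => ?_, fun w _ w' _ h => prefixCount_injective h, ?_⟩
  · rw [Set.mem_ofPred_eq, ← prefixCount_length_mem_latticePoints_iff hn.symm] at hw
    refine ⟨fun i => mem_latticePoints_of_le hw (prefixCount_mono w i.is_le),
      strictMono_prefixCount w, prefixCount_zero w, ?_⟩
    simpa using sum_prefixCount_length w univ
  · rintro c ⟨hlat, hc, h0, hlast⟩
    obtain ⟨w, hw⟩ := exists_prefixCount_eq_of_strictMono hc h0 hlast
    refine ⟨w, ?_, funext hw⟩
    rw [Set.mem_ofPred_eq, ← prefixCount_length_mem_latticePoints_iff hn.symm]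
    simpa [← hw] using hlat (Fin.last n)

/-- for a preorder `τ` (relation `r`) on an `n`-element set `E`,
the maximal chains of the poset of lattice points of `Q_{τ*}` — the saturated
chains `0 = c₀ < c₁ < ⋯ < c_n` with top element of coordinate sum `n` — are
in bijection with the words `w ∈ E^n` such that every order ideal `I` of `τ`
contributes at least `|I|` letters of `w`.  The bijection (stated here in the
inverse direction) sends the word `w` to the chain whose `i`-th element counts
the occurrences of each letter among the first `i` letters of `w`; its inverse
records, at each covering step of a chain, the unique coordinate which
increases. -/
theorem maximal_chains_words_bijection (E : Type*) [Fintype E] [DecidableEq E]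
    (r : E → E → Prop) (hrefl : ∀ a, r a a) (htrans : ∀ a b c, r a b → r b c → r a c)
    (n : ℕ) (hn : n = Fintype.card E) :
    Set.BijOn
      (fun (w : Fin n → E) (i : Fin (n + 1)) (e : E) =>
        (Finset.univ.filter (fun j : Fin n => (j : ℕ) < (i : ℕ) ∧ w j = e)).card)
      {w : Fin n → E | ∀ I : Finset E, IsOrderIdeal r I →
        I.card ≤ (Finset.univ.filter (fun i : Fin n => w i ∈ I)).card}
      {c : Fin (n + 1) → (E → ℕ) |
        (∀ i, c i ∈ latticePoints E (fun a b => r b a)) ∧ StrictMono c ∧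
          c 0 = 0 ∧ ∑ e : E, c (Fin.last n) e = n} :=
  maximal_chains_words_bijection_general E r n hn
end

section
/- Let τ* be a chain preorder on E = {1,…,n} with vertex sizes r₁,…,r_p and partial sums s_i = r₁+⋯+r_i. The maximal elements of P_{τ*} are exactly the tuples (a₁,…,a_n) ∈ ℕ^n with a₁+⋯+a_n = n and a₁+⋯+a_{s_i} ≥ s_i for 1 ≤ i ≤ p−1, and these are in bijection with the lattice points (b₁,…,b_n) ∈ ℕ^n satisfying b₁+⋯+b_{s_i} < s_i for 1 ≤ i ≤ p, via b_j = #{ i ∈ {1,…,n} : a₁+⋯+a_i = j−1 }. -/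
/-!
Write `F m = a₀ + ⋯ + a_{m-1}` for the prefix sums of `a` and `G` for those of its image `b`.
Then `G k = #{i | F (i + 1) < k}`, and monotonicity of `F` turns this into the Galois
connection `G (k + 1) ≤ m ↔ k < F (m + 1)`, which is symmetric in `F` and `G`. Hence the map is
an involution on tuples of total at most `n`, and at `k = m = s i - 1` it exchanges
`s i ≤ F (s i)` with `G (s i) < s i`.

A lattice point of `Q_{τ*}` of total below `n` is not maximal: raising its first coordinate
only affects the constraint at `s 0 = 0`, i.e. the total. At total `n` the suffix constraints
are exactly the prefix conditions `s i ≤ F (s i)`.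
-/

open Finset

section PrefixSum

variable {n : ℕ}

def prefixSum (x : Fin n → ℕ) (m : ℕ) : ℕ :=
  ∑ j ∈ univ.filter (fun j : Fin n => (j : ℕ) < m), x j

variable (x : Fin n → ℕ)

lemma prefixSum_mono : Monotone (prefixSum x) := fun _ _ h =>
  sum_le_sum_of_subset fun j => by simp only [mem_filter, mem_univ, true_and]; omega

@[simp]
lemma prefixSum_zero : prefixSum x 0 = 0 := by
  simp [prefixSum]

lemma prefixSum_of_le {m : ℕ} (h : n ≤ m) : prefixSum x m = ∑ j, x j := by
  rw [prefixSum, filter_true_of_mem fun j _ => j.isLt.trans_le h]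

lemma prefixSum_succ (i : Fin n) : prefixSum x (i + 1) = prefixSum x i + x i := by
  have h : univ.filter (fun j : Fin n => (j : ℕ) < i + 1) =
      insert i (univ.filter fun j : Fin n => (j : ℕ) < i) := by
    ext k
    simp only [mem_filter, mem_univ, true_and, mem_insert, Fin.ext_iff]
    omega
  rw [prefixSum, h, sum_insert (by simp), add_comm]
  rfl

lemma sum_filter_le_eq_prefixSum_succ (i : Fin n) :
    ∑ k ∈ univ.filter (fun k : Fin n => (k : ℕ) ≤ i), x k = prefixSum x (i + 1) := by
  simp only [prefixSum, Nat.lt_succ_iff]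

lemma prefixSum_add_sum_filter_le (m : ℕ) :
    prefixSum x m + ∑ j ∈ univ.filter (fun j : Fin n => m ≤ (j : ℕ)), x j = ∑ j, x j := by
  simp only [prefixSum, ← not_lt]
  exact sum_filter_add_sum_filter_not univ _ x

lemma eq_of_prefixSum_eq {x y : Fin n → ℕ} (h : ∀ m ≤ n, prefixSum x m = prefixSum y m) :
    x = y := by
  funext i
  have := h (i + 1) i.isLt
  rw [prefixSum_succ, prefixSum_succ, h i i.isLt.le] at this
  omega

end PrefixSum

lemma card_filter_lt_le_iff {n : ℕ} {f : ℕ → ℕ} (hf : Monotone f) {m c : ℕ} (hm : m < n) :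
    #{k : Fin n | f k < c} ≤ m ↔ c ≤ f m := by
  constructor
  · intro hcard
    by_contra! hfm
    have hsub : univ.filter (fun k : Fin n => (k : ℕ) < m + 1) ⊆ univ.filter (fun k => f k < c) :=
      fun k => by
        simp only [mem_filter, mem_univ, true_and]
        exact fun hk => (hf (Nat.lt_succ_iff.mp hk)).trans_lt hfm
    have := card_le_card hsub
    rw [Fin.card_filter_val_lt] at this
    omega
  · intro hcf
    have hsub : univ.filter (fun k : Fin n => f k < c) ⊆ univ.filter (fun k => (k : ℕ) < m) :=
      fun k => by
        simp only [mem_filter, mem_univ, true_and]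
        exact fun hk => by_contra fun hmk => (hcf.trans (hf (not_lt.mp hmk))).not_gt hk
    exact (card_le_card hsub).trans (Fin.card_filter_val_lt.trans_le (min_le_right _ _))

section PrefixSumCount

variable {n : ℕ}

def prefixSumCount (x : Fin n → ℕ) (j : Fin n) : ℕ :=
  #{i : Fin n | prefixSum x (i + 1) = j}

variable (x : Fin n → ℕ)

lemma prefixSum_prefixSumCount {m : ℕ} (hm : m ≤ n) :
    prefixSum (prefixSumCount x) m = #{k : Fin n | prefixSum x (k + 1) < m} := by
  set t := (univ.filter fun j : Fin n => (j : ℕ) < m).map Fin.valEmbedding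
  have hmaps : ((univ.filter fun k : Fin n => prefixSum x (k + 1) < m : Finset (Fin n)) :
      Set (Fin n)).MapsTo (fun k : Fin n => prefixSum x (k + 1)) t := fun k hk => by
    simp only [coe_filter, mem_univ, true_and, Set.mem_ofPred_eq] at hk
    simpa [t] using ⟨⟨_, hk.trans_le hm⟩, hk, rfl⟩
  rw [card_eq_sum_card_fiberwise hmaps, sum_map, prefixSum]
  refine sum_congr rfl fun j hj => ?_
  rw [prefixSumCount, filter_filter]
  refine congrArg card (filter_congr fun k _ => ?_)
  simp only [mem_filter, mem_univ, true_and] at hj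
  simp only [Fin.valEmbedding_apply]
  omega

lemma sum_prefixSumCount_le : ∑ j, prefixSumCount x j ≤ n := by
  rw [← prefixSum_of_le _ le_rfl, prefixSum_prefixSumCount x le_rfl]
  exact (card_le_univ _).trans_eq (Fintype.card_fin n)

lemma prefixSum_prefixSumCount_succ_le_iff {k m : ℕ} (hk : k < n) (hm : m < n) :
    prefixSum (prefixSumCount x) (k + 1) ≤ m ↔ k < prefixSum x (m + 1) := by
  rw [prefixSum_prefixSumCount x hk]
  exact card_filter_lt_le_iff (fun _ _ h => prefixSum_mono x (Nat.succ_le_succ h)) hm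

lemma prefixSum_prefixSumCount_lt_self_iff {c : ℕ} (hc : 0 < c) (hcn : c ≤ n) :
    prefixSum (prefixSumCount x) c < c ↔ c ≤ prefixSum x c := by
  obtain ⟨k, rfl⟩ := Nat.exists_eq_add_of_lt hc
  simpa [Nat.lt_succ_iff] using
    prefixSum_prefixSumCount_succ_le_iff x (m := k) (by omega) (by omega)

lemma prefixSumCount_prefixSumCount (hx : ∑ j, x j ≤ n) :
    prefixSumCount (prefixSumCount x) = x := by
  refine eq_of_prefixSum_eq fun m hm => ?_
  rcases m with _ | m
  · simp
  have hxm : prefixSum x (m + 1) ≤ n :=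
    (prefixSum_mono x hm).trans ((prefixSum_of_le x le_rfl).trans_le hx)
  rw [prefixSum_prefixSumCount _ hm]
  simp only [Nat.lt_succ_iff]
  rw [filter_congr fun k _ => prefixSum_prefixSumCount_succ_le_iff x k.isLt hm,
    Fin.card_filter_val_lt, min_eq_right hxm]

end PrefixSumCount

lemma sum_filter_le_le_sub_iff {n : ℕ} {x : Fin n → ℕ} (hx : ∑ j, x j = n) {m : ℕ} (hm : m ≤ n) :
    ∑ j ∈ univ.filter (fun j : Fin n => m ≤ (j : ℕ)), x j ≤ n - m ↔ m ≤ prefixSum x m := by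
  have := prefixSum_add_sum_filter_le x m
  omega

section ChainPreorder

variable {n : ℕ} (p : ℕ) (s : ℕ → ℕ)

/-- The lattice points of the dual polytope `Q_{τ*}`, where `s i` is the `i`-th partial sum of
the vertex sizes. -/
def dualChainPoints : Set (Fin n → ℕ) :=
  {c | ∀ i < p, ∑ j ∈ univ.filter (fun j : Fin n => s i ≤ (j : ℕ)), c j ≤ n - s i}

def prefixSumGeTuples : Set (Fin n → ℕ) :=
  {a | ∑ j, a j = n ∧ ∀ i, 1 ≤ i → i ≤ p - 1 → s i ≤ prefixSum a (s i)}

def prefixSumLtTuples : Set (Fin n → ℕ) :=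
  {b | ∀ i, 1 ≤ i → i ≤ p → prefixSum b (s i) < s i}

variable {p s}

lemma sum_le_of_mem_dualChainPoints (hp : 0 < p) (hs0 : s 0 = 0) {c : Fin n → ℕ}
    (hc : c ∈ dualChainPoints p s) : ∑ j, c j ≤ n := by
  simpa [hs0] using hc 0 hp

lemma add_single_mem_dualChainPoints {c : Fin n → ℕ} (hc : c ∈ dualChainPoints p s)
    (hlt : ∑ j, c j < n) {e : Fin n} (he : (e : ℕ) = 0) :
    c + Pi.single e 1 ∈ dualChainPoints p s := by
  intro i hi
  have hci := hc i hi
  simp only [Pi.add_apply, sum_add_distrib, sum_pi_single', mem_filter, mem_univ, true_and, he]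
  split_ifs with hsi
  · rw [Nat.le_zero.mp hsi, filter_true_of_mem fun j _ => Nat.zero_le _]
    omega
  · simpa using hci

lemma maximal_dualChainPoints_eq (hp : 0 < p) (hs0 : s 0 = 0) (hsn : ∀ i < p, s i ≤ n) :
    {a : Fin n → ℕ | a ∈ dualChainPoints p s ∧
      ∀ c ∈ dualChainPoints p s, (∀ j, a j ≤ c j) → c = a} = prefixSumGeTuples p s := by
  ext a
  constructor
  · rintro ⟨ha, hmax⟩
    have htot : ∑ j, a j = n := by
      refine le_antisymm (sum_le_of_mem_dualChainPoints hp hs0 ha) (not_lt.mp fun hlt => ?_)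
      have := congrFun (hmax _ (add_single_mem_dualChainPoints ha hlt (e := ⟨0, by omega⟩) rfl)
        fun j => Nat.le_add_right _ _) ⟨0, by omega⟩
      simp at this
    exact ⟨htot, fun i hi1 hip =>
      (sum_filter_le_le_sub_iff htot (hsn i (by omega))).mp (ha i (by omega))⟩
  · rintro ⟨htot, hge⟩
    have ha : a ∈ dualChainPoints p s := fun i hi => by
      rcases Nat.eq_zero_or_pos i with rfl | hi1
      · simp [hs0, htot]
      · exact (sum_filter_le_le_sub_iff htot (hsn i hi)).mpr (hge i hi1 (by omega))
    refine ⟨ha, fun c hc hac => ?_⟩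
    have hsum : ∑ j, c j = ∑ j, a j :=
      le_antisymm ((sum_le_of_mem_dualChainPoints hp hs0 hc).trans_eq htot.symm)
        (sum_le_sum fun j _ => hac j)
    funext j
    exact ((sum_eq_sum_iff_of_le fun j _ => hac j).mp hsum.symm j (mem_univ j)).symm

lemma mapsTo_prefixSumCount_prefixSumGeTuples (hsp : s p = n)
    (hs_pos : ∀ i, 1 ≤ i → i ≤ p → 0 < s i) (hsn : ∀ i ≤ p, s i ≤ n) :
    Set.MapsTo (prefixSumCount (n := n)) (prefixSumGeTuples p s) (prefixSumLtTuples p s) := by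
  rintro a ⟨htot, hge⟩ i hi1 hip
  rw [prefixSum_prefixSumCount_lt_self_iff a (hs_pos i hi1 hip) (hsn i hip)]
  rcases hip.lt_or_eq with hip | rfl
  · exact hge i hi1 (by omega)
  · rw [hsp, prefixSum_of_le a le_rfl, htot]

lemma mapsTo_prefixSumCount_prefixSumLtTuples (hp : 1 ≤ p) (hsp : s p = n)
    (hs_pos : ∀ i, 1 ≤ i → i ≤ p → 0 < s i) (hsn : ∀ i ≤ p, s i ≤ n) :
    Set.MapsTo (prefixSumCount (n := n)) (prefixSumLtTuples p s) (prefixSumGeTuples p s) := by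
  intro b hb
  have hge : ∀ i, 1 ≤ i → i ≤ p → s i ≤ prefixSum (prefixSumCount b) (s i) := fun i hi1 hip =>
    not_lt.mp fun h => (hb i hi1 hip).not_ge
      ((prefixSum_prefixSumCount_lt_self_iff b (hs_pos i hi1 hip) (hsn i hip)).mp h)
  refine ⟨le_antisymm (sum_prefixSumCount_le b) ?_, fun i hi1 hip => hge i hi1 (by omega)⟩
  simpa [hsp, prefixSum_of_le] using hge p hp le_rfl

lemma bijOn_prefixSumCount (hp : 1 ≤ p) (hsp : s p = n)
    (hs_pos : ∀ i, 1 ≤ i → i ≤ p → 0 < s i) (hsn : ∀ i ≤ p, s i ≤ n) :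
    Set.BijOn (prefixSumCount (n := n)) (prefixSumGeTuples p s) (prefixSumLtTuples p s) := by
  refine Set.InvOn.bijOn ⟨fun a ha => prefixSumCount_prefixSumCount a ha.1.le,
    fun b hb => prefixSumCount_prefixSumCount b ?_⟩
    (mapsTo_prefixSumCount_prefixSumGeTuples hsp hs_pos hsn)
    (mapsTo_prefixSumCount_prefixSumLtTuples hp hsp hs_pos hsn)
  have := hb p hp le_rfl
  rw [hsp, prefixSum_of_le b le_rfl] at this
  exact this.le

end ChainPreorder

/-- for a chain preorder with vertex sizes `r₁,…,r_p` and partial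
sums `s i` (`s 0 = 0`, `s p = n`), the maximal elements of the poset of lattice
points of the dual polytope `Q_{τ*}` (given by `x_{s_i+1}+⋯+x_n ≤ n−s_i`,
`0 ≤ i ≤ p−1`) are exactly the tuples `a ∈ ℕ^n` with total sum `n` and
`a₁+⋯+a_{s_i} ≥ s_i` for `1 ≤ i ≤ p−1`, and the map
`b_j = #{i : a₁+⋯+a_i = j−1}` is a bijection from these onto the tuples
`b ∈ ℕ^n` with `b₁+⋯+b_{s_i} < s_i` for `1 ≤ i ≤ p`. -/
theorem chain_maximal_elements_bijection (n p : ℕ) (hp : 1 ≤ p) (s : ℕ → ℕ)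
    (hs0 : s 0 = 0) (hsp : s p = n) (hmono : ∀ i < p, s i < s (i + 1)) :
    ({a : Fin n → ℕ |
        (∀ i < p, ∑ j ∈ Finset.univ.filter (fun j : Fin n => s i ≤ (j : ℕ)), a j ≤ n - s i) ∧
        ∀ c : Fin n → ℕ,
          (∀ i < p, ∑ j ∈ Finset.univ.filter (fun j : Fin n => s i ≤ (j : ℕ)), c j ≤ n - s i) →
          (∀ j, a j ≤ c j) → c = a} =
      {a : Fin n → ℕ | ∑ j, a j = n ∧
        ∀ i, 1 ≤ i → i ≤ p - 1 →
          s i ≤ ∑ j ∈ Finset.univ.filter (fun j : Fin n => (j : ℕ) < s i), a j}) ∧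
    Set.BijOn
      (fun (a : Fin n → ℕ) (j : Fin n) =>
        (Finset.univ.filter (fun i : Fin n =>
          (∑ k ∈ Finset.univ.filter (fun k : Fin n => (k : ℕ) ≤ (i : ℕ)), a k) = (j : ℕ))).card)
      {a : Fin n → ℕ | ∑ j, a j = n ∧
        ∀ i, 1 ≤ i → i ≤ p - 1 →
          s i ≤ ∑ j ∈ Finset.univ.filter (fun j : Fin n => (j : ℕ) < s i), a j}
      {b : Fin n → ℕ | ∀ i, 1 ≤ i → i ≤ p →
        ∑ j ∈ Finset.univ.filter (fun j : Fin n => (j : ℕ) < s i), b j < s i} := by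
  have hs_strict : StrictMonoOn s (Set.Iic p) := strictMonoOn_Iic_of_lt_succ hmono
  have hsn : ∀ i ≤ p, s i ≤ n := fun i hi =>
    hsp ▸ hs_strict.monotoneOn hi (Set.mem_Iic.mpr le_rfl) hi
  have hs_pos : ∀ i, 1 ≤ i → i ≤ p → 0 < s i := fun i hi1 hip =>
    hs0 ▸ hs_strict (Set.mem_Iic.mpr (Nat.zero_le p)) hip hi1
  refine ⟨maximal_dualChainPoints_eq hp hs0 fun i hi => hsn i hi.le, ?_⟩
  convert bijOn_prefixSumCount hp hsp hs_pos hsn using 1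
  · funext a j
    simp only [sum_filter_le_eq_prefixSum_succ]
    rfl
  · rfl
  · rfl
end

section
/- MacMahon's formula: for a finite tuple (a_e)_{e∈E} of nonnegative integers with total sum N, the generating function Σ_{m≥0} (Π_{e∈E} C(m + a_e, a_e)) t^m equals (Σ_w t^{des(w)}) / (1−t)^{N+1}, where the sum is over all permutations w of the multiset containing a_e copies of e for each e ∈ E (E totally ordered), and des(w) is the number of descents of w. -/
open scoped Classical

/-- The number of descents of a word `w : Fin N → E`, `E` linearly ordered. -/
noncomputable def desN {E : Type*} [LinearOrder E] {N : ℕ} (w : Fin N → E) : ℕ :=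
  (Finset.univ.filter (fun i : Fin N =>
    if h : (i : ℕ) + 1 < N then w ⟨(i : ℕ) + 1, h⟩ < w i else False)).card

/-!
Stanley's barred-word argument. After division by `(1 - t) ^ (N + 1)`, the coefficient of `t ^ m`
on either side counts the pairs `(w, g)` of a word `w` with content `a` and a labelling
`g : Fin N → Fin (m + 1)` such that `i ↦ (g i, w i)` is monotone for the lexicographic order that
compares labels decreasingly. Such a sequence is a multiset of pairs (label, letter), which splits
by letter into multisets of `a e` labels: there are `∏ e, C(m + a e, a e)` of them. For a fixed
`w`, the admissible `g` decrease weakly, and strictly at each descent of `w`; adding to `g i` the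
number of descents before `i` and subtracting `des w` turns them into the weakly decreasing
sequences with values at most `m - des w`, of which there are `C(m - des w + N, N)`, the
coefficient of `t ^ m` in `t ^ des w / (1 - t) ^ (N + 1)`.
-/

open Finset

namespace Fin

variable {α : Type*} [LinearOrder α]

theorem monotone_iff_le_add_one {n : ℕ} {f : Fin n → α} :
    Monotone f ↔ ∀ i (h : i + 1 < n), f ⟨i, by omega⟩ ≤ f ⟨i + 1, h⟩ := by
  cases n with
  | zero => simp [Subsingleton.monotone f]
  | succ n => simp [Fin.monotone_iff_le_succ, Fin.forall_iff]

theorem antitone_iff_add_one_le {n : ℕ} {f : Fin n → α} :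
    Antitone f ↔ ∀ i (h : i + 1 < n), f ⟨i + 1, h⟩ ≤ f ⟨i, by omega⟩ :=
  monotone_iff_le_add_one (α := αᵒᵈ)

variable (α) in
def monotoneEquivSym (n : ℕ) : {f : Fin n → α // Monotone f} ≃ Sym α n where
  toFun f := ⟨List.ofFn f.1, by simp⟩
  invFun s := ⟨fun i => (s.1.sort)[(i : ℕ)]'(by simp),
    fun _ _ h => (Multiset.pairwise_sort s.1 _).sortedLE h⟩
  left_inv f := by
    have : (List.ofFn f.1 : Multiset α).sort = List.ofFn f.1 :=
      List.Perm.eq_of_sortedLE (Multiset.pairwise_sort _ _).sortedLE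
        (List.sortedLE_ofFn_iff.mpr f.2) (Multiset.coe_eq_coe.mp (Multiset.sort_eq _ _))
    ext i
    exact (List.getElem_of_eq this _).trans (List.getElem_ofFn ..)
  right_inv s := by
    refine Sym.ext ((congrArg _ (List.ext_getElem (by simp) fun _ _ _ => ?_)).trans
      (Multiset.sort_eq s.1 (· ≤ ·)))
    simp

theorem coe_monotoneEquivSym_apply {n : ℕ} (f : {f : Fin n → α // Monotone f}) :
    (monotoneEquivSym α n f : Multiset α) = List.ofFn f.1 :=
  rfl

theorem card_antitone [Fintype α] (n : ℕ) :
    Fintype.card {f : Fin n → α // Antitone f} = (Fintype.card α + n - 1).choose n :=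
  (Fintype.card_congr (monotoneEquivSym αᵒᵈ n : {f : Fin n → α // Antitone f} ≃ Sym αᵒᵈ n)).trans
    (Sym.card_sym_eq_choose n)

variable (α) in
noncomputable def monotoneEquivNatSum [Fintype α] (n : ℕ) :
    {f : Fin n → α // Monotone f} ≃ {P : α → ℕ // ∑ x, P x = n} :=
  (monotoneEquivSym α n).trans (Sym.equivNatSumOfFintype α n)

theorem coe_monotoneEquivNatSum_apply_apply [Fintype α] {n : ℕ} (f : {f : Fin n → α // Monotone f})
    (x : α) : (monotoneEquivNatSum α n f : α → ℕ) x = #{i | f.1 i = x} := by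
  rw [monotoneEquivNatSum, Equiv.trans_apply, Sym.coe_equivNatSumOfFintype_apply_apply,
    coe_monotoneEquivSym_apply, ← Fin.univ_val_map, Multiset.count_map]
  simp only [card_def, filter_val, eq_comm]

end Fin

theorem card_filter_snd_eq_sum_card {ι α β : Type*} [Fintype ι] [Fintype α] [LinearOrder α]
    [LinearOrder β] (f : ι → Lex (α × β)) (b : β) :
    #{i | (ofLex (f i)).2 = b} = ∑ x, #{i | f i = toLex (x, b)} := by
  rw [card_eq_sum_card_fiberwise (f := fun i => (ofLex (f i)).1) (t := univ)
    fun _ _ => mem_coe.mpr (mem_univ _)]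
  refine sum_congr rfl fun x _ => congrArg card ?_
  rw [filter_filter]
  refine filter_congr fun i _ => ?_
  rw [← toLex_ofLex (f i), toLex_inj, Prod.ext_iff, ofLex_toLex, and_comm]

noncomputable def natSumFiberwiseEquivPiSym {α β : Type*} [Fintype α] [DecidableEq α]
    (a : β → ℕ) : {P : α × β → ℕ // ∀ b, ∑ x, P (x, b) = a b} ≃ ∀ b, Sym α (a b) where
  toFun P b := (Sym.equivNatSumOfFintype α (a b)).symm ⟨fun x => P.1 (x, b), P.2 b⟩
  invFun Q := ⟨fun x => (Sym.equivNatSumOfFintype α _ (Q x.2)).1 x.1,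
    fun b => (Sym.equivNatSumOfFintype α _ (Q b)).2⟩
  left_inv P := by ext; simp
  right_inv Q := funext fun b => (Sym.equivNatSumOfFintype α _).symm_apply_apply (Q b)

theorem card_monotone_lex_of_card_snd {α β : Type*} [LinearOrder α] [Fintype α] [LinearOrder β]
    [Fintype β] (a : β → ℕ) {n : ℕ} (hn : n = ∑ b, a b) :
    Fintype.card {f : Fin n → Lex (α × β) //
        Monotone f ∧ ∀ b, #{i | (ofLex (f i)).2 = b} = a b} =
      ∏ b, (Fintype.card α + a b - 1).choose (a b) := by
  have hsum (P : Lex (α × β) → ℕ) (hP : ∀ b, ∑ x, P (toLex (x, b)) = a b) : ∑ x, P x = n := by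
    rw [hn, ← sum_congr rfl fun b _ => hP b]
    exact Fintype.sum_prod_type_right (fun x => P (toLex x))
  have e : {f : Fin n → Lex (α × β) // Monotone f ∧ ∀ b, #{i | (ofLex (f i)).2 = b} = a b} ≃
      {P : Lex (α × β) → ℕ // ∑ x, P x = n ∧ ∀ b, ∑ x, P (toLex (x, b)) = a b} :=
    (Equiv.subtypeSubtypeEquivSubtypeInter (Monotone ·) _).symm.trans <|
      ((Fin.monotoneEquivNatSum _ n).subtypeEquiv fun f => by
        simp only [Fin.coe_monotoneEquivNatSum_apply_apply, card_filter_snd_eq_sum_card]).trans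
      (Equiv.subtypeSubtypeEquivSubtypeInter _ _)
  have e' : {P : Lex (α × β) → ℕ // ∑ x, P x = n ∧ ∀ b, ∑ x, P (toLex (x, b)) = a b} ≃
      {P : α × β → ℕ // ∀ b, ∑ x, P (x, b) = a b} :=
    Equiv.subtypeEquivRight fun P => and_iff_right_of_imp (hsum P)
  rw [Fintype.card_congr ((e.trans e').trans (natSumFiberwiseEquivPiSym a)), Fintype.card_pi]
  simp [Sym.card_sym_eq_choose]

theorem card_subtype_prod_and {α β : Type*} [Fintype α] [Fintype β] (p : α → Prop)
    (q : α → β → Prop) [DecidablePred p] [∀ a, DecidablePred (q a)] :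
    Fintype.card {x : α × β // p x.1 ∧ q x.1 x.2} =
      ∑ a ∈ univ.filter p, Fintype.card {b // q a b} := by
  rw [Fintype.card_subtype, card_filter, Fintype.sum_prod_type, sum_filter]
  refine sum_congr rfl fun a _ => ?_
  rw [Fintype.card_subtype, card_filter]
  split_ifs with ha <;> simp [ha]

theorem PowerSeries.coeff_X_pow_mul_invOneSubPow {S : Type*} [CommRing S] (d n m : ℕ) :
    coeff m (X ^ d * (invOneSubPow S (n + 1)).val) =
      if d ≤ m then ((m - d + n).choose n : S) else 0 := by
  rw [invOneSubPow_val_succ_eq_mk_add_choose, coeff_X_pow_mul']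
  split_ifs <;> simp [add_comm]

namespace MacMahon

variable {E : Type*} [LinearOrder E] {N : ℕ}

noncomputable def descentSet (w : Fin N → E) : Finset (Fin N) :=
  {i | if h : (i : ℕ) + 1 < N then w ⟨(i : ℕ) + 1, h⟩ < w i else False}

theorem mem_descentSet {w : Fin N → E} {i : ℕ} (h : i + 1 < N) :
    ⟨i, by omega⟩ ∈ descentSet w ↔ w ⟨i + 1, h⟩ < w ⟨i, by omega⟩ := by
  simp [descentSet, h]

theorem lt_of_mem_descentSet {w : Fin N → E} {i : Fin N} (hi : i ∈ descentSet w) :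
    (i : ℕ) + 1 < N := by
  by_contra h
  simp [descentSet, h] at hi

noncomputable def descentsBefore (w : Fin N → E) (k : ℕ) : ℕ :=
  #((descentSet w).filter (fun i : Fin N => (i : ℕ) < k))

theorem descentsBefore_zero (w : Fin N → E) : descentsBefore w 0 = 0 := by
  simp [descentsBefore]

theorem descentsBefore_le_desN (w : Fin N → E) (k : ℕ) : descentsBefore w k ≤ desN w :=
  card_filter_le _ _

theorem descentsBefore_of_le (w : Fin N → E) {k : ℕ} (hk : N ≤ k + 1) :
    descentsBefore w k = desN w := by
  rw [descentsBefore, filter_true_of_mem fun i hi => by have := lt_of_mem_descentSet hi; omega]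
  rfl

theorem descentsBefore_succ (w : Fin N → E) {i : ℕ} (h : i + 1 < N) :
    descentsBefore w (i + 1) =
      descentsBefore w i + if w ⟨i + 1, h⟩ < w ⟨i, by omega⟩ then 1 else 0 := by
  have hsplit : (descentSet w).filter (fun j : Fin N => (j : ℕ) < i + 1) =
      (descentSet w).filter (fun j : Fin N => (j : ℕ) < i) ∪
        (descentSet w).filter (fun j => j = ⟨i, by omega⟩) := by
    ext j
    simp only [mem_filter, mem_union, ← and_or_left, Fin.ext_iff, Nat.lt_succ_iff_lt_or_eq]
  rw [descentsBefore, hsplit, card_union_of_disjoint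
    (disjoint_filter.mpr fun _ _ h1 h2 => by rw [h2] at h1; exact lt_irrefl _ h1),
    filter_eq', apply_ite card, card_singleton, card_empty]
  simp only [mem_descentSet h]
  rfl

def IsCompatible (w : Fin N → E) {K : ℕ} (g : Fin N → Fin K) : Prop :=
  Monotone fun i => toLex (OrderDual.toDual (g i), w i)

theorem isCompatible_iff_antitone {w : Fin N → E} {K : ℕ} {g : Fin N → Fin K} :
    IsCompatible w g ↔ Antitone fun i : Fin N => (g i : ℕ) + descentsBefore w i := by
  rw [IsCompatible, Fin.monotone_iff_le_add_one, Fin.antitone_iff_add_one_le]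
  refine forall₂_congr fun i h => ?_
  simp only [Prod.Lex.toLex_le_toLex, OrderDual.toDual_lt_toDual, OrderDual.toDual_inj,
    descentsBefore_succ w h, Fin.lt_def, Fin.ext_iff]
  split_ifs with hd
  · simp only [not_le.mpr hd, and_false, or_false]; omega
  · simp only [not_lt.mp hd, and_true]; omega

theorem IsCompatible.bounds {w : Fin N → E} {K : ℕ} {g : Fin N → Fin K} (hg : IsCompatible w g)
    (i : Fin N) : desN w ≤ g i + descentsBefore w i ∧ g i + descentsBefore w i < K := by
  have hanti := isCompatible_iff_antitone.mp hg
  have hi := i.2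
  constructor
  · have hlast := hanti (show i ≤ ⟨N - 1, by omega⟩ from Fin.le_def.mpr (by dsimp only; omega))
    dsimp only at hlast
    rw [descentsBefore_of_le w (by omega)] at hlast
    omega
  · have hfirst := hanti (show ⟨0, by omega⟩ ≤ i from Fin.le_def.mpr (by simp))
    dsimp only at hfirst
    rw [descentsBefore_zero] at hfirst
    have := (g ⟨0, by omega⟩).2
    omega

noncomputable def compatibleEquivAntitone (w : Fin N → E) (K : ℕ) :
    {g : Fin N → Fin K // IsCompatible w g} ≃ {h : Fin N → Fin (K - desN w) // Antitone h} where
  toFun g := ⟨fun i => ⟨g.1 i + descentsBefore w i - desN w, by have := g.2.bounds i; omega⟩,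
    fun i j hij => by
      have := isCompatible_iff_antitone.mp g.2 hij
      simp only [Fin.le_def] at this ⊢
      omega⟩
  invFun h := ⟨fun i => ⟨h.1 i + desN w - descentsBefore w i, by
      have := (h.1 i).2; have := descentsBefore_le_desN w i; omega⟩,
    isCompatible_iff_antitone.mpr fun i j hij => by
      have := Fin.le_def.mp (h.2 hij)
      have := descentsBefore_le_desN w i
      have := descentsBefore_le_desN w j
      dsimp only
      omega⟩
  left_inv g := by
    ext i
    have := g.2.bounds i
    dsimp only
    omega
  right_inv h := by
    ext i
    have := descentsBefore_le_desN w i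
    dsimp only
    omega

theorem card_isCompatible (w : Fin N → E) (K : ℕ) :
    Fintype.card {g : Fin N → Fin K // IsCompatible w g} = (K - desN w + N - 1).choose N := by
  rw [Fintype.card_congr (compatibleEquivAntitone w K), Fin.card_antitone, Fintype.card_fin]

theorem desN_le (w : Fin N → E) : desN w ≤ N :=
  (card_le_univ _).trans_eq (Fintype.card_fin N)

theorem card_isCompatible_eq_ite (w : Fin N → E) (m : ℕ) :
    Fintype.card {g : Fin N → Fin (m + 1) // IsCompatible w g} =
      if desN w ≤ m then (m - desN w + N).choose N else 0 := by
  rw [card_isCompatible]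
  split_ifs with h
  · congr 1; omega
  · exact Nat.choose_eq_zero_of_lt (by have := desN_le w; omega)

def lexPairEquiv {K : ℕ} : (Fin N → E) × (Fin N → Fin K) ≃ (Fin N → Lex ((Fin K)ᵒᵈ × E)) where
  toFun p i := toLex (OrderDual.toDual (p.2 i), p.1 i)
  invFun f := (fun i => (ofLex (f i)).2, fun i => OrderDual.ofDual (ofLex (f i)).1)
  left_inv _ := rfl
  right_inv _ := rfl

theorem card_compatible_pairs [Fintype E] (a : E → ℕ) (hN : N = ∑ e, a e) (K : ℕ) :
    Fintype.card {p : (Fin N → E) × (Fin N → Fin K) //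
        (∀ e, #{i | p.1 i = e} = a e) ∧ IsCompatible p.1 p.2} =
      ∏ e, (K + a e - 1).choose (a e) := by
  have := card_monotone_lex_of_card_snd (α := (Fin K)ᵒᵈ) a hN
  rw [Fintype.card_orderDual, Fintype.card_fin] at this
  rw [← this]
  exact Fintype.card_congr (lexPairEquiv.subtypeEquiv fun _ => and_comm)

theorem prod_choose_eq_sum_descents [Fintype E] (a : E → ℕ) (hN : N = ∑ e, a e) (m : ℕ) :
    ∏ e, (m + a e).choose (a e) =
      ∑ w ∈ univ.filter (fun w : Fin N → E => ∀ e, #{i | w i = e} = a e),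
        if desN w ≤ m then (m - desN w + N).choose N else 0 := by
  calc ∏ e, (m + a e).choose (a e)
      = ∏ e, (m + 1 + a e - 1).choose (a e) := by simp [Nat.add_right_comm m 1]
    _ = Fintype.card {p : (Fin N → E) × (Fin N → Fin (m + 1)) //
          (∀ e, #{i | p.1 i = e} = a e) ∧ IsCompatible p.1 p.2} :=
      (card_compatible_pairs a hN (m + 1)).symm
    _ = ∑ w ∈ univ.filter (fun w : Fin N → E => ∀ e, #{i | w i = e} = a e),
          Fintype.card {g : Fin N → Fin (m + 1) // IsCompatible w g} :=
      card_subtype_prod_and (fun w => ∀ e, #{i | w i = e} = a e) (fun w g => IsCompatible w g)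
    _ = _ := sum_congr rfl fun w _ => card_isCompatible_eq_ite w m

end MacMahon

/-- MacMahon's formula: for nonnegative integers `(a_e)_{e ∈ E}`
with total sum `N`,
`Σ_{m ≥ 0} (Π_e C(m + a_e, a_e)) t^m = (Σ_w t^{des w}) / (1−t)^{N+1}`,
the sum being over all permutations `w` of the multiset with `a_e` copies of
each `e`; stated as an identity of formal power series after clearing the
denominator. -/
theorem macmahon_formula (E : Type*) [Fintype E] [LinearOrder E]
    (a : E → ℕ) (N : ℕ) (hN : N = ∑ e, a e) :
    PowerSeries.mk (fun m => (∏ e, ((m + a e).choose (a e) : ℚ))) *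
        (1 - PowerSeries.X) ^ (N + 1) =
      ∑ w ∈ Finset.univ.filter
          (fun w : Fin N → E =>
            ∀ e, (Finset.univ.filter (fun i => w i = e)).card = a e),
        (PowerSeries.X : PowerSeries ℚ) ^ desN w := by
  have hdiv : PowerSeries.mk (fun m => (∏ e, ((m + a e).choose (a e) : ℚ))) =
      (∑ w ∈ univ.filter (fun w : Fin N → E => ∀ e, #{i | w i = e} = a e),
        PowerSeries.X ^ desN w) * (PowerSeries.invOneSubPow ℚ (N + 1)).val := by
    ext m
    simp only [PowerSeries.coeff_mk, sum_mul, map_sum, PowerSeries.coeff_X_pow_mul_invOneSubPow]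
    exact_mod_cast MacMahon.prod_choose_eq_sum_descents a hN m
  rw [hdiv, mul_assoc, ← PowerSeries.invOneSubPow_inv_eq_one_sub_pow,
    (PowerSeries.invOneSubPow ℚ (N + 1)).val_inv, mul_one]
end

section
/- Let h_n(t) be the polynomial counting lattice points of the preorder polytope of the zig-zag poset Z_n by the number of nonzero coordinates. Then h_n(t) satisfies the Delannoy recurrence h_n(t) = (1+t)h_{n−1}(t) + t h_{n−2}(t) for n ≥ 2, with h₀(t) = 1 and h₁(t) = 1 + t; hence h_n(t) equals the n-th Delannoy polynomial d_n(t), and the number of lattice points h_n(1) is the n-th Pell-type number satisfying h_n(1) = 2h_{n−1}(1) + h_{n−2}(1). -/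
open Polynomial

/-- The zig-zag partial order `Z_n` on `{1, …, n}` (indices `0, …, n−1`):
with 1-indexed positions, `i ≺ i+1` for odd `i` and `i ≻ i+1` for even `i`. -/
def zigzagRel (n : ℕ) (x y : Fin n) : Prop :=
  x = y ∨ ((y : ℕ) = (x : ℕ) + 1 ∧ Even (x : ℕ)) ∨
    ((x : ℕ) = (y : ℕ) + 1 ∧ Odd (y : ℕ))

/-- The polynomial counting lattice points of the preorder polytope of `Z_n`
by number of nonzero coordinates. -/
noncomputable def zigzagH (n : ℕ) : Polynomial ℤ :=
  ∑ᶠ a ∈ {a : Fin n → ℕ | (fun i => (a i : ℝ)) ∈ preorderPolytope (Fin n) (zigzagRel n)},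
    (X : Polynomial ℤ) ^ (Finset.univ.filter (fun i => a i ≠ 0)).card

/-- The Delannoy polynomials. -/
noncomputable def delannoy : ℕ → Polynomial ℤ
  | 0 => 1
  | 1 => 1 + X
  | (n + 2) => (1 + X) * delannoy (n + 1) + X * delannoy n

/-!
With positions indexed from `0`, the even positions are the minimal elements of `Z_n`, and an
order ideal is a disjoint union of intervals `[l, r]` with `l` even and `r` even or `r = n - 1`.
So `a ∈ ℕⁿ` is a lattice point of `Q_{Z_n}` iff `∑_{i=l}^{r} (a_i - 1) ≤ 0` on each such interval,
and these conditions are checked in one left-to-right scan by the running maximum `excess`.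
Since the excess is at least `-1` at a minimal element, the last two coordinates of a lattice point
of length `n + 2` are tightly constrained: either it arises from a lattice point of length `n + 1`
by appending `0` or `1`, giving `(1 + t) h_{n+1}`, or from a lattice point of length `n` by
appending two coordinates, exactly one of them nonzero and determined by the excess, giving
`t h_n`.
-/

open Finset Function

namespace Zigzag

/-- `excess a r` is the largest value of `∑ i ∈ Icc l r, (a i - 1)` over even `l ≤ r`. -/
def excess (a : ℕ → ℕ) : ℕ → ℤ
  | 0 => a 0 - 1
  | r + 1 => a (r + 1) - 1 + if Even (r + 1) then max (excess a r) 0 else excess a r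

def Feasible (n : ℕ) (a : ℕ → ℕ) : Prop :=
  ∀ r < n, (Even r ∨ r + 1 = n) → excess a r ≤ 0

lemma excess_congr {a b : ℕ → ℕ} {r : ℕ} (h : ∀ i ≤ r, a i = b i) :
    excess a r = excess b r := by
  induction r with
  | zero => simp [excess, h 0 le_rfl]
  | succ r ih => simp [excess, h (r + 1) le_rfl, ih fun i hi => h i (by omega)]

lemma neg_one_le_excess (a : ℕ → ℕ) {r : ℕ} (hr : Even r) : -1 ≤ excess a r := by
  cases r with
  | zero => simp only [excess]; omega
  | succ r => simp only [excess, if_pos hr]; omega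

lemma excess_eq_neg_one_iff {a : ℕ → ℕ} {m : ℕ} (hm : Even m) :
    excess a m = -1 ↔ a m = 0 ∧ ∀ r, r + 1 = m → excess a r ≤ 0 := by
  cases m with
  | zero => simp [excess]
  | succ r => simp only [excess, if_pos hm, add_left_inj, forall_eq]; omega

lemma exists_sum_Icc_eq_excess (a : ℕ → ℕ) (r : ℕ) :
    ∃ l ≤ r, Even l ∧ ∑ i ∈ Icc l r, ((a i : ℤ) - 1) = excess a r := by
  induction r with
  | zero => exact ⟨0, le_rfl, Even.zero, by simp [excess]⟩
  | succ r ih =>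
    obtain ⟨l, hlr, hl, hsum⟩ := ih
    by_cases hfresh : Even (r + 1) ∧ excess a r < 0
    · exact ⟨r + 1, le_rfl, hfresh.1, by simp [excess, hfresh.1, max_eq_right hfresh.2.le]⟩
    · refine ⟨l, by omega, hl, ?_⟩
      rw [sum_Icc_succ_top (by omega), hsum, excess]
      split_ifs with h
      · rw [max_eq_left (not_lt.1 fun h' => hfresh ⟨h, h'⟩)]; ring
      · ring

lemma prefix_sum_le_excess {n : ℕ} {a : ℕ → ℕ} (ha : ∀ r < n, Even r → excess a r ≤ 0)
    {J : Finset ℕ} (hdown : ∀ i, Even i → i + 1 ∈ J → i ∈ J)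
    (hup : ∀ i, Odd i → i ∈ J → i + 1 < n → i + 1 ∈ J) :
    ∀ r < n, ∑ i ∈ range (r + 1), (if i ∈ J then (a i : ℤ) - 1 else 0) ≤
      if r ∈ J then excess a r else 0 := by
  intro r
  induction r with
  | zero => intro; by_cases h0 : 0 ∈ J <;> simp [excess, h0]
  | succ r ih =>
    intro hr
    have ih := ih (by omega)
    rw [sum_range_succ]
    by_cases hr1 : r + 1 ∈ J
    · simp only [if_pos hr1, excess]
      by_cases heven : Even (r + 1)
      · simp only [if_pos heven]; split_ifs at ih <;> omega
      · have hrJ : r ∈ J := hdown r (by simpa [Nat.even_add_one] using heven) hr1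
        simp only [if_neg heven, if_pos hrJ] at ih ⊢; omega
    · simp only [if_neg hr1, add_zero]
      split_ifs at ih with hrJ
      · rcases Nat.even_or_odd r with heven | hodd
        · exact ih.trans (ha r (by omega) heven)
        · exact absurd (hup r hodd hrJ hr) hr1
      · exact ih

lemma sum_le_card_of_feasible {n : ℕ} {a : ℕ → ℕ} (ha : Feasible n a) {J : Finset ℕ}
    (hJ : J ⊆ range n) (hdown : ∀ i, Even i → i + 1 ∈ J → i ∈ J)
    (hup : ∀ i, Odd i → i ∈ J → i + 1 < n → i + 1 ∈ J) :
    ∑ i ∈ J, a i ≤ #J := by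
  cases n with
  | zero => simp [subset_empty.1 (range_zero ▸ hJ)]
  | succ k =>
    have hprefix := prefix_sum_le_excess (fun r hr he => ha r hr (Or.inl he)) hdown hup k
      (by omega)
    have hlast : (if k ∈ J then excess a k else 0) ≤ 0 := by
      split_ifs
      · exact ha k (by omega) (Or.inr rfl)
      · exact le_rfl
    rw [sum_ite_mem, inter_eq_right.2 hJ, sum_sub_distrib, sum_const, nsmul_one] at hprefix
    exact_mod_cast (sub_nonpos.1 (hprefix.trans hlast))

lemma sum_le_card_iff_feasible {n : ℕ} (a : ℕ → ℕ) :
    (∀ I : Finset (Fin n), IsOrderIdeal (zigzagRel n) I → ∑ i ∈ I, a i ≤ #I) ↔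
      Feasible n a := by
  constructor
  · intro h r hr hend
    obtain ⟨l, hlr, hl, hsum⟩ := exists_sum_Icc_eq_excess a r
    have hideal : IsOrderIdeal (zigzagRel n) (Icc ⟨l, by omega⟩ ⟨r, hr⟩) := by
      rintro x y (rfl | ⟨hxy, hx⟩ | ⟨hxy, hy⟩) hyI <;> simp only [mem_Icc, Fin.le_def] at hyI ⊢
      · exact hyI
      · have : l ≠ y := fun hly => by
          rw [← hly] at hxy; exact Nat.not_even_iff_odd.2 (hxy ▸ hx.add_one) hl
        omega
      · have : (y : ℕ) ≠ r := fun hyr => by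
          rcases hend with hr' | hr'
          · exact Nat.not_even_iff_odd.2 (hyr ▸ hy) hr'
          · omega
        omega
    have hle := h _ hideal
    rw [Fin.card_Icc, show ∑ i ∈ Icc (⟨l, _⟩ : Fin n) ⟨r, hr⟩, a i = ∑ i ∈ Icc l r, a i by
      simpa [Fin.map_valEmbedding_Icc] using (sum_map (Icc _ _) Fin.valEmbedding a).symm] at hle
    rw [← hsum, sum_sub_distrib, sum_const, Nat.card_Icc, nsmul_one, ← Nat.cast_sum]
    simp only at hle
    omega
  · intro ha I hI
    rw [← card_map Fin.valEmbedding, show ∑ i ∈ I, a i = ∑ i ∈ I.map Fin.valEmbedding, a i from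
      (sum_map I Fin.valEmbedding a).symm]
    refine sum_le_card_of_feasible ha (fun i hi => ?_) (fun i hi hi1 => ?_) (fun i hi hiJ hin => ?_)
    · obtain ⟨x, -, rfl⟩ := mem_map.1 hi; simp
    · obtain ⟨x, hx, hxi⟩ := mem_map.1 hi1
      rw [Fin.valEmbedding_apply] at hxi
      exact mem_map.2 ⟨⟨i, by omega⟩, hI _ x (Or.inr (Or.inl ⟨hxi, hi⟩)) hx, rfl⟩
    · obtain ⟨x, hx, rfl⟩ := mem_map.1 hiJ
      exact mem_map.2 ⟨⟨x + 1, hin⟩, hI _ x (Or.inr (Or.inr ⟨rfl, hi⟩)) hx, rfl⟩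

lemma finite_setOf_feasible (n : ℕ) :
    {a : ℕ → ℕ | (∀ i, n ≤ i → a i = 0) ∧ Feasible n a}.Finite := by
  refine Set.Finite.of_finite_image (f := fun a (i : Fin n) => a i)
    ((Set.finite_Iic fun _ => n).subset ?_) fun a ha b hb hab => funext fun i => ?_
  · rintro _ ⟨a, ⟨-, ha⟩, rfl⟩ i
    have hsum := sum_le_card_of_feasible ha (subset_refl _)
      (fun i _ h => by rw [mem_range] at h ⊢; omega) fun i _ _ h => mem_range.2 h
    simpa using (single_le_sum (fun j _ => Nat.zero_le (a j)) (mem_range.2 i.2)).trans hsum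
  · by_cases hi : i < n
    · exact congrFun hab ⟨i, hi⟩
    · rw [ha.1 i (by omega), hb.1 i (by omega)]

noncomputable def latticePoints (n : ℕ) : Finset (ℕ → ℕ) := (finite_setOf_feasible n).toFinset

lemma mem_latticePoints {n : ℕ} {a : ℕ → ℕ} :
    a ∈ latticePoints n ↔ (∀ i, n ≤ i → a i = 0) ∧ Feasible n a :=
  Set.Finite.mem_toFinset _

noncomputable def weight (n : ℕ) (a : ℕ → ℕ) : ℤ[X] := ∏ i ∈ range n, if a i = 0 then 1 else X

noncomputable def latticePoly (n : ℕ) : ℤ[X] := ∑ a ∈ latticePoints n, weight n a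

lemma natCast_mem_preorderPolytope_iff {E : Type*} [Fintype E] (r : E → E → Prop) (a : E → ℕ) :
    (fun e => (a e : ℝ)) ∈ preorderPolytope E r ↔
      ∀ I : Finset E, IsOrderIdeal r I → ∑ e ∈ I, a e ≤ #I := by
  simp only [preorderPolytope, Set.mem_ofPred_eq, Nat.cast_nonneg, implies_true, true_and]
  exact forall₂_congr fun I _ => by norm_cast

lemma extend_val_mem_latticePoints_iff {n : ℕ} (a : Fin n → ℕ) :
    extend Fin.val a 0 ∈ latticePoints n ↔
      (fun i => (a i : ℝ)) ∈ preorderPolytope (Fin n) (zigzagRel n) := by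
  rw [natCast_mem_preorderPolytope_iff, mem_latticePoints, ← sum_le_card_iff_feasible]
  simp only [Fin.val_injective.extend_apply]
  exact and_iff_right fun i hi => extend_apply' _ _ _ fun ⟨j, hj⟩ => by omega

lemma X_pow_card_eq_weight_extend {n : ℕ} (a : Fin n → ℕ) :
    (X : ℤ[X]) ^ #{i | a i ≠ 0} = weight n (extend Fin.val a 0) := by
  rw [weight, ← Fin.prod_univ_eq_prod_range, ← prod_const, prod_filter]
  simp only [Fin.val_injective.extend_apply, ite_not]

lemma zigzagH_eq_latticePoly (n : ℕ) : zigzagH n = latticePoly n := by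
  rw [zigzagH, latticePoly, ← finsum_mem_coe_finset]
  refine finsum_mem_eq_of_bijOn (fun a => extend Fin.val a 0) ⟨fun a ha => ?_,
    (extend_injective Fin.val_injective 0).injOn, fun b hb => ?_⟩ fun a _ => ?_
  · exact (extend_val_mem_latticePoints_iff a).2 ha
  · have hext : extend Fin.val (fun i : Fin n => b i) 0 = b := funext fun i => by
      by_cases hi : i < n
      · exact Fin.val_injective.extend_apply (fun j : Fin n => b j) 0 ⟨i, hi⟩
      · rw [extend_apply' _ _ _ fun ⟨j, hj⟩ => by omega, (mem_latticePoints.1 hb).1 i (by omega)]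
        rfl
    exact ⟨_, (extend_val_mem_latticePoints_iff _).1 (by rwa [hext]), hext⟩
  · exact X_pow_card_eq_weight_extend a

lemma weight_congr {n : ℕ} {a b : ℕ → ℕ} (h : ∀ i < n, a i = b i) : weight n a = weight n b :=
  prod_congr rfl fun i hi => by rw [h i (mem_range.1 hi)]

lemma weight_update_self (a : ℕ → ℕ) (n v : ℕ) :
    weight (n + 1) (update a n v) = weight n a * if v = 0 then 1 else X := by
  rw [weight, prod_range_succ, update_self]
  exact congrArg (· * _) (weight_congr fun i hi => update_of_ne hi.ne _ _)

lemma weight_of_le {n N : ℕ} {a : ℕ → ℕ} (hnN : n ≤ N) (h : ∀ i, n ≤ i → i < N → a i = 0) :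
    weight N a = weight n a := by
  rw [weight, weight, ← prod_range_mul_prod_Ico _ hnN,
    prod_eq_one (s := Ico n N) fun i hi => ?_, mul_one]
  rw [mem_Ico] at hi
  simp [h i hi.1 hi.2]

lemma latticePoly_zero : latticePoly 0 = 1 := by
  have : latticePoints 0 = {0} := eq_singleton_iff_unique_mem.2
    ⟨mem_latticePoints.2 ⟨fun _ _ => rfl, fun r hr => absurd hr r.not_lt_zero⟩,
      fun a ha => funext fun i => (mem_latticePoints.1 ha).1 i i.zero_le⟩
  simp [latticePoly, this, weight]

lemma truncation_mem_latticePoints {N n : ℕ} {a b : ℕ → ℕ} (ha : Feasible N a) (hnN : n ≤ N)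
    (hba : ∀ i < n, b i = a i) (hb : ∀ i, n ≤ i → b i = 0)
    (hlast : ∀ r, r + 1 = n → excess a r ≤ 0) : b ∈ latticePoints n := by
  refine mem_latticePoints.2 ⟨hb, fun r hr hend => ?_⟩
  rw [excess_congr fun i hi => hba i (by omega)]
  exact hend.elim (fun h => ha r (by omega) (Or.inl h)) (hlast r)

lemma update_mem_latticePoints_succ {n v : ℕ} {b : ℕ → ℕ} (hb : b ∈ latticePoints n)
    (hv : v ≤ 1) : update b n v ∈ latticePoints (n + 1) := by
  obtain ⟨hsupp, hfeas⟩ := mem_latticePoints.1 hb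
  have hbelow : ∀ r < n, excess (update b n v) r = excess b r :=
    fun r hr => excess_congr fun i hi => update_of_ne (by omega) _ _
  refine mem_latticePoints.2 ⟨fun i hi => ?_, fun r hr hend => ?_⟩
  · rw [update_of_ne (by omega)]; exact hsupp i (by omega)
  obtain hrn | rfl := Nat.lt_succ_iff_lt_or_eq.1 hr
  · rw [hbelow r hrn]; exact hfeas r hrn (Or.inl (hend.resolve_right (by omega)))
  cases r with
  | zero => simp [excess]; omega
  | succ k =>
    have hk := hbelow k (by omega) ▸ hfeas k (by omega) (Or.inr rfl)
    simp only [excess, update_self]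
    split_ifs <;> omega

def IsExtension (n : ℕ) (a : ℕ → ℕ) : Prop := update a n 0 ∈ latticePoints n ∧ a n ≤ 1

open Classical in
lemma sum_isExtension (n : ℕ) :
    ∑ a ∈ (latticePoints (n + 1)).filter (IsExtension n), weight (n + 1) a =
      (1 + X) * latticePoly n := by
  calc _ = ∑ p ∈ latticePoints n ×ˢ range 2, weight (n + 1) (update p.1 n p.2) := by
        refine (sum_nbij' (fun p : (ℕ → ℕ) × ℕ => update p.1 n p.2)
          (fun a : ℕ → ℕ => (update a n 0, a n))
          (fun p hp => ?_) (fun a ha => ?_) (fun p hp => ?_) (fun a _ => by simp)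
          fun _ _ => rfl).symm
        · obtain ⟨hb, hv⟩ := mem_product.1 hp
          have hbn := (mem_latticePoints.1 hb).1 n le_rfl
          refine mem_filter.2 ⟨update_mem_latticePoints_succ hb (by rw [mem_range] at hv; omega), ?_, ?_⟩
          · rwa [update_idem, update_eq_self_iff.2 hbn.symm]
          · rw [mem_range] at hv; simp only [update_self]; omega
        · obtain ⟨-, hext, hle⟩ := mem_filter.1 ha
          exact mem_product.2 ⟨hext, mem_range.2 (by omega)⟩
        · have hbn := (mem_latticePoints.1 (mem_product.1 hp).1).1 n le_rfl
          have : update p.1 n 0 = p.1 := hbn ▸ update_eq_self n p.1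
          simp [this]
    _ = ∑ b ∈ latticePoints n, ∑ v ∈ range 2, weight (n + 1) (update b n v) := sum_product ..
    _ = ∑ b ∈ latticePoints n, (1 + X) * weight n b := sum_congr rfl fun b _ => by
        simp [sum_range_succ, weight_update_self]; ring
    _ = _ := (mul_sum ..).symm

open Classical in
lemma latticePoly_succ (n : ℕ) :
    latticePoly (n + 1) = (1 + X) * latticePoly n +
      ∑ a ∈ (latticePoints (n + 1)).filter (¬ IsExtension n ·), weight (n + 1) a := by
  rw [← sum_isExtension, sum_filter_add_sum_filter_not, latticePoly]

lemma latticePoly_one : latticePoly 1 = 1 + X := by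
  classical
  rw [latticePoly_succ, latticePoly_zero, mul_one, add_eq_left]
  refine sum_eq_zero fun a ha => absurd ?_ (mem_filter.1 ha).2
  obtain ⟨hsupp, hfeas⟩ := mem_latticePoints.1 (mem_filter.1 ha).1
  refine ⟨truncation_mem_latticePoints hfeas (Nat.zero_le 1) (by simp) (fun i _ => ?_) (by simp),
    ?_⟩
  · rcases i with _ | i
    · simp
    · rw [update_of_ne (by omega)]; exact hsupp _ (by omega)
  have := hfeas 0 one_pos (Or.inl Even.zero)
  simp only [excess] at this
  omega

lemma excess_eq_neg_one_of_mem {m : ℕ} {c : ℕ → ℕ} (hm : Even m) (hc : c ∈ latticePoints m) :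
    excess c m = -1 :=
  (excess_eq_neg_one_iff hm).2 ⟨(mem_latticePoints.1 hc).1 m le_rfl,
    fun r hr => (mem_latticePoints.1 hc).2 r (by omega) (Or.inr hr)⟩

lemma update_two_mem_latticePoints {m : ℕ} {c : ℕ → ℕ} (hm : Even m) (hc : c ∈ latticePoints m) :
    update c (m + 1) 2 ∈ latticePoints (m + 2) := by
  obtain ⟨hsupp, hfeas⟩ := mem_latticePoints.1 hc
  have hbelow : ∀ r ≤ m, excess (update c (m + 1) 2) r = excess c r :=
    fun r hr => excess_congr fun i hi => update_of_ne (by omega) _ _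
  have hcm := excess_eq_neg_one_of_mem hm hc
  refine mem_latticePoints.2 ⟨fun i hi => ?_, fun r hr hend => ?_⟩
  · rw [update_of_ne (by omega)]; exact hsupp i (by omega)
  obtain hrm | rfl | rfl : r < m ∨ r = m ∨ r = m + 1 := by omega
  · rw [hbelow r hrm.le]; exact hfeas r hrm (Or.inl (hend.resolve_right (by omega)))
  · rw [hbelow r le_rfl, hcm]; norm_num
  · have hodd : ¬ Even (m + 1) := Nat.not_even_iff_odd.2 hm.add_one
    simp only [excess, update_self, if_neg hodd, hbelow m le_rfl, hcm]
    norm_num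

lemma not_isExtension_of_even {m : ℕ} {a : ℕ → ℕ} (hm : Even m) (ha : a ∈ latticePoints (m + 2))
    (hext : ¬ IsExtension (m + 1) a) :
    a (m + 1) = 2 ∧ update a (m + 1) 0 ∈ latticePoints m := by
  obtain ⟨hsupp, hfeas⟩ := mem_latticePoints.1 ha
  have htrunc : update a (m + 1) 0 ∈ latticePoints (m + 1) :=
    truncation_mem_latticePoints hfeas (by omega) (fun i hi => update_of_ne (by omega) _ _)
      (fun i hi => by
        rcases eq_or_ne i (m + 1) with rfl | hi'
        · exact update_self ..
        · rw [update_of_ne hi']; exact hsupp i (by omega))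
      fun r hr => hfeas r (by omega) (Or.inl (by rwa [show r = m by omega]))
  have hlast := hfeas (m + 1) (by omega) (Or.inr rfl)
  have hodd : ¬ Even (m + 1) := Nat.not_even_iff_odd.2 hm.add_one
  simp only [excess, if_neg hodd] at hlast
  have h2 : 2 ≤ a (m + 1) := by
    by_contra h
    exact hext ⟨htrunc, by omega⟩
  have := neg_one_le_excess a hm
  obtain ⟨ham, hprev⟩ := (excess_eq_neg_one_iff (a := a) hm).1 (by omega)
  refine ⟨by omega, truncation_mem_latticePoints hfeas (by omega)
    (fun i hi => update_of_ne (by omega) _ _) (fun i hi => ?_) hprev⟩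
  obtain rfl | rfl | hi' : i = m ∨ i = m + 1 ∨ m + 2 ≤ i := by omega
  · rwa [update_of_ne (by omega)]
  · exact update_self ..
  · rw [update_of_ne (by omega)]; exact hsupp i hi'

open Classical in
lemma sum_not_isExtension_of_even {m : ℕ} (hm : Even m) :
    ∑ a ∈ (latticePoints (m + 2)).filter (¬ IsExtension (m + 1) ·), weight (m + 2) a =
      X * latticePoly m := by
  rw [latticePoly, mul_sum]
  refine (sum_nbij' (fun c : ℕ → ℕ => update c (m + 1) 2) (fun a : ℕ → ℕ => update a (m + 1) 0)
    (fun c hc => ?_) (fun a ha => ?_) (fun c hc => ?_) (fun a ha => ?_) (fun c hc => ?_)).symm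
  · exact mem_filter.2 ⟨update_two_mem_latticePoints hm hc, fun h => by simpa using h.2⟩
  · exact (not_isExtension_of_even hm (mem_filter.1 ha).1 (mem_filter.1 ha).2).2
  · have := (mem_latticePoints.1 hc).1 (m + 1) (by omega)
    rw [update_idem, ← this, update_eq_self]
  · rw [update_idem, ← (not_isExtension_of_even hm (mem_filter.1 ha).1 (mem_filter.1 ha).2).1,
      update_eq_self]
  · have hsupp := (mem_latticePoints.1 hc).1
    rw [weight_update_self, if_neg two_ne_zero, weight_of_le (Nat.le_succ m)
      fun i hi hi' => hsupp i hi, mul_comm]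

lemma excess_update_toNat {k : ℕ} {c : ℕ → ℕ} (hk : Even k) (hc : c ∈ latticePoints (k + 1)) :
    excess (update c (k + 1) (2 - excess c k).toNat) (k + 1) = 1 := by
  have hle := (mem_latticePoints.1 hc).2 k (by omega) (Or.inl hk)
  have hge := neg_one_le_excess c hk
  have hodd : ¬ Even (k + 1) := Nat.not_even_iff_odd.2 hk.add_one
  have hbelow : excess (update c (k + 1) (2 - excess c k).toNat) k = excess c k :=
    excess_congr fun i hi => update_of_ne (by omega) _ _
  rw [excess, update_self, if_neg hodd, hbelow, Int.toNat_of_nonneg (by omega)]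
  ring

lemma update_toNat_mem_latticePoints {k : ℕ} {c : ℕ → ℕ} (hk : Even k)
    (hc : c ∈ latticePoints (k + 1)) :
    update c (k + 1) (2 - excess c k).toNat ∈ latticePoints (k + 3) := by
  obtain ⟨hsupp, hfeas⟩ := mem_latticePoints.1 hc
  refine mem_latticePoints.2 ⟨fun i hi => ?_, fun r hr hend => ?_⟩
  · rw [update_of_ne (by omega)]; exact hsupp i (by omega)
  obtain hrk | rfl | rfl : r ≤ k ∨ r = k + 1 ∨ r = k + 2 := by omega
  · rw [excess_congr fun i hi => update_of_ne (by omega) _ _]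
    exact hfeas r (by omega) (Or.inl (hend.resolve_right (by omega)))
  · exact absurd (hend.resolve_right (by omega)) (Nat.not_even_iff_odd.2 hk.add_one)
  · have heven : Even (k + 2) := hk.add even_two
    rw [show k + 2 = k + 1 + 1 from rfl, excess, if_pos heven, excess_update_toNat hk hc,
      update_of_ne (by omega), hsupp _ (by omega)]
    norm_num

lemma not_isExtension_of_odd {k : ℕ} {a : ℕ → ℕ} (hk : Even k) (ha : a ∈ latticePoints (k + 3))
    (hext : ¬ IsExtension (k + 2) a) :
    a (k + 1) = (2 - excess a k).toNat ∧ update a (k + 1) 0 ∈ latticePoints (k + 1) := by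
  obtain ⟨hsupp, hfeas⟩ := mem_latticePoints.1 ha
  have heven : Even (k + 2) := hk.add even_two
  have hlast : (a (k + 2) : ℤ) - 1 + max (excess a (k + 1)) 0 ≤ 0 := by
    simpa only [excess, if_pos heven] using hfeas (k + 2) (by omega) (Or.inr rfl)
  have hpos : 0 < excess a (k + 1) := by
    by_contra! h
    refine hext ⟨truncation_mem_latticePoints hfeas (by omega)
      (fun i hi => update_of_ne (by omega) _ _) (fun i hi => ?_) fun r hr => ?_, by omega⟩
    · rcases eq_or_ne i (k + 2) with rfl | hi'
      · exact update_self ..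
      · rw [update_of_ne hi']; exact hsupp i (by omega)
    · rwa [show r = k + 1 by omega]
  have hodd : ¬ Even (k + 1) := Nat.not_even_iff_odd.2 hk.add_one
  have hstep : excess a (k + 1) = a (k + 1) - 1 + excess a k := by simp [excess, hodd]
  refine ⟨by omega, truncation_mem_latticePoints hfeas (by omega)
    (fun i hi => update_of_ne (by omega) _ _) (fun i hi => ?_) fun r hr => ?_⟩
  · obtain rfl | rfl | hi' : i = k + 1 ∨ i = k + 2 ∨ k + 3 ≤ i := by omega
    · exact update_self ..
    · rw [update_of_ne (by omega)]; omega
    · rw [update_of_ne (by omega)]; exact hsupp i hi'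
  · exact hfeas r (by omega) (Or.inl (by rwa [show r = k by omega]))

open Classical in
lemma sum_not_isExtension_of_odd {k : ℕ} (hk : Even k) :
    ∑ a ∈ (latticePoints (k + 3)).filter (¬ IsExtension (k + 2) ·), weight (k + 3) a =
      X * latticePoly (k + 1) := by
  rw [latticePoly, mul_sum]
  refine (sum_nbij' (fun c : ℕ → ℕ => update c (k + 1) (2 - excess c k).toNat)
    (fun a : ℕ → ℕ => update a (k + 1) 0)
    (fun c hc => ?_) (fun a ha => ?_) (fun c hc => ?_) (fun a ha => ?_) (fun c hc => ?_)).symm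
  · refine mem_filter.2 ⟨update_toNat_mem_latticePoints hk hc, fun h => ?_⟩
    have := (mem_latticePoints.1 h.1).2 (k + 1) (by omega) (Or.inr rfl)
    rw [excess_congr fun i hi => update_of_ne (by omega) _ _, excess_update_toNat hk hc] at this
    omega
  · exact (not_isExtension_of_odd hk (mem_filter.1 ha).1 (mem_filter.1 ha).2).2
  · have := (mem_latticePoints.1 hc).1 (k + 1) le_rfl
    rw [update_idem, ← this, update_eq_self]
  · obtain ⟨hval, -⟩ := not_isExtension_of_odd hk (mem_filter.1 ha).1 (mem_filter.1 ha).2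
    rw [update_idem, excess_congr (b := a) fun i hi => update_of_ne (by omega) _ _, ← hval,
      update_eq_self]
  · have hsupp := (mem_latticePoints.1 hc).1
    have hne : (2 - excess c k).toNat ≠ 0 := by
      have := (mem_latticePoints.1 hc).2 k (by omega) (Or.inl hk)
      omega
    rw [weight_of_le (n := k + 2) (N := k + 3) (a := update c (k + 1) _) (by omega)
      fun i hi hi' => by rw [update_of_ne (by omega)]; exact hsupp i (by omega),
      show k + 2 = k + 1 + 1 from rfl, weight_update_self, if_neg hne, mul_comm]

lemma latticePoly_add_two (n : ℕ) :
    latticePoly (n + 2) = (1 + X) * latticePoly (n + 1) + X * latticePoly n := by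
  rw [latticePoly_succ (n + 1)]
  congr 1
  obtain hn | ⟨k, hk, rfl⟩ : Even n ∨ ∃ k, Even k ∧ n = k + 1 :=
    (Nat.even_or_odd n).imp_right fun ⟨k, hk⟩ => ⟨2 * k, even_two_mul k, hk⟩
  · exact sum_not_isExtension_of_even hn
  · exact sum_not_isExtension_of_odd hk

end Zigzag

/-- the `h`-polynomial of the zig-zag poset satisfies the
Delannoy recurrence with the Delannoy initial conditions, hence equals the
`n`-th Delannoy polynomial, and its value at `1` (the number of lattice
points) satisfies the Pell recurrence. -/
theorem zigzag_h_eq_delannoy :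
    zigzagH 0 = 1 ∧ zigzagH 1 = 1 + X ∧
    (∀ n, 2 ≤ n → zigzagH n = (1 + X) * zigzagH (n - 1) + X * zigzagH (n - 2)) ∧
    (∀ n, zigzagH n = delannoy n) ∧
    (∀ n, 2 ≤ n →
      (zigzagH n).eval 1 = 2 * (zigzagH (n - 1)).eval 1 + (zigzagH (n - 2)).eval 1) := by
  have hrec : ∀ n, 2 ≤ n → zigzagH n = (1 + X) * zigzagH (n - 1) + X * zigzagH (n - 2) := by
    intro n hn
    obtain ⟨m, rfl⟩ := Nat.exists_eq_add_of_le' hn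
    simpa only [Zigzag.zigzagH_eq_latticePoly, Nat.add_sub_cancel, Nat.add_succ_sub_one]
      using Zigzag.latticePoly_add_two m
  have h0 : zigzagH 0 = 1 := by rw [Zigzag.zigzagH_eq_latticePoly, Zigzag.latticePoly_zero]
  have h1 : zigzagH 1 = 1 + X := by rw [Zigzag.zigzagH_eq_latticePoly, Zigzag.latticePoly_one]
  refine ⟨h0, h1, hrec, fun n => ?_, fun n hn => ?_⟩
  · induction n using Nat.twoStepInduction with
    | zero => rw [h0, delannoy]
    | one => rw [h1, delannoy]
    | more n ih₀ ih₁ =>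
      rw [hrec (n + 2) (by omega), delannoy, Nat.add_succ_sub_one, Nat.add_sub_cancel, ih₀, ih₁]
  · rw [hrec n hn]
    simp only [eval_add, eval_mul, eval_one, eval_X]
    ring
end

section
/- Let τ_{m,n} be the ordinal sum of an m-element antichain below an n-element antichain. The lattice points of Q_{τ_{m,n}} are exactly the tuples (a₁,…,a_m,b₁,…,b_n) ∈ ℕ^{m+n} with a_i ∈ {0,1} for all i and, setting k = Σ a_i and writing c_j = max(b_j − 1, 0), the condition Σ_{j : b_j ≥ 1} (b_j − 1) ≤ m − k. Consequently the h-polynomial (counting lattice points by number of nonzero coordinates) equals Σ_{k=0}^m Σ_{ℓ=0}^n C(m−k+ℓ, ℓ) C(m,k) C(n,ℓ) t^{k+ℓ}. -/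
open Polynomial

/-- The ordinal sum of an `m`-element antichain below an `n`-element
antichain: every element of the first summand is below every element of the
second one. -/
def ordinalSumRel (m n : ℕ) (x y : Fin m ⊕ Fin n) : Prop :=
  x = y ∨ (x.isLeft = true ∧ y.isRight = true)

/-!
The order ideals of `τ_{m,n}` are the sets `s ⊔ ∅` and `[m] ⊔ t`. The first kind forces
`a_i ≤ 1`; among the second kind the binding one is `[m] ⊔ supp b`, which yields
`∑_j (b_j - 1)₊ ≤ m - ∑_i a_i`. So a lattice point is a subset `s ⊆ [m]` together with a tuple
`b ∈ ℕⁿ` of total excess at most `m - |s|`. The tuples of excess at most `M` with support of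
size `ℓ` number `C(M + ℓ, ℓ) C(n, ℓ)`: peeling off the first coordinate gives a recursion
in `n` that is solved by Pascal's rule and the hockey-stick identity.
-/

open Finset

theorem natCast_mem_preorderPolytope_iff {E : Type*} [Fintype E] (r : E → E → Prop)
    (x : E → ℕ) :
    (fun e => (x e : ℝ)) ∈ preorderPolytope E r ↔
      ∀ I : Finset E, IsOrderIdeal r I → ∑ e ∈ I, x e ≤ #I := by
  simp only [preorderPolytope, Set.mem_ofPred_eq, Nat.cast_nonneg, implies_true, true_and]
  exact forall₂_congr fun I _ => by exact_mod_cast Iff.rfl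

section FinsetSums

variable {ι : Type*}

theorem forall_sum_le_card_iff (a : ι → ℕ) :
    (∀ s : Finset ι, ∑ i ∈ s, a i ≤ #s) ↔ ∀ i, a i ≤ 1 := by
  refine ⟨fun h i => by simpa using h {i}, fun h s => ?_⟩
  simpa using sum_le_card_nsmul s a 1 fun i _ => h i

theorem sum_le_sum_tsub_one_add_card (s : Finset ι) (b : ι → ℕ) :
    ∑ j ∈ s, b j ≤ ∑ j ∈ s, (b j - 1) + #s := by
  rw [card_eq_sum_ones, ← sum_add_distrib]
  exact sum_le_sum fun j _ => by omega

theorem sum_tsub_one_add_card_filter_ne_zero (s : Finset ι) (b : ι → ℕ) :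
    ∑ j ∈ s, (b j - 1) + #{j ∈ s | b j ≠ 0} = ∑ j ∈ s, b j := by
  rw [card_filter, ← sum_add_distrib]
  exact sum_congr rfl fun j _ => by split_ifs <;> omega

/-- The binding `t` is the support of `b`: each of its elements adds its excess `b j - 1` to
the left-hand side, and no other element adds anything. -/
theorem forall_add_sum_le_add_card_iff [Fintype ι] (b : ι → ℕ) {c M : ℕ} (hc : c ≤ M) :
    (∀ t : Finset ι, c + ∑ j ∈ t, b j ≤ M + #t) ↔ ∑ j, (b j - 1) ≤ M - c := by
  constructor
  · intro h
    have hsupp := h {j | b j ≠ 0}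
    have hexcess := sum_tsub_one_add_card_filter_ne_zero univ b
    rw [sum_filter_ne_zero] at hsupp
    omega
  · intro h t
    have hexcess := sum_le_sum_tsub_one_add_card t b
    have hmono : ∑ j ∈ t, (b j - 1) ≤ ∑ j, (b j - 1) := sum_le_sum_of_subset (subset_univ t)
    omega

theorem card_filter_sumElim_ne_zero {α β : Type*} [Fintype α] [Fintype β] (f : α → ℕ)
    (g : β → ℕ) :
    #{e | Sum.elim f g e ≠ 0} = #{i | f i ≠ 0} + #{j | g j ≠ 0} := by
  rw [card_filter, card_filter, card_filter, Fintype.sum_sum_type]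
  rfl

theorem sum_eq_card_filter_ne_zero_of_le_one [Fintype ι] {a : ι → ℕ} (ha : ∀ i, a i ≤ 1) :
    ∑ i, a i = #{i | a i ≠ 0} := by
  have hexcess : ∑ i, (a i - 1) = 0 := sum_eq_zero fun i _ => Nat.sub_eq_zero_of_le (ha i)
  rw [← sum_tsub_one_add_card_filter_ne_zero univ a, hexcess, zero_add]

end FinsetSums

section Excess

/-- Subtraction is truncated: the coordinates `0` and `1` carry no excess. The bound `M + 2`
on the coordinates only makes the set finite (`mem_excessLE`). -/
def excessLE (n M : ℕ) : Finset (Fin n → ℕ) :=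
  {b ∈ Fintype.piFinset fun _ => range (M + 2) | ∑ j, (b j - 1) ≤ M}

theorem mem_excessLE {n M : ℕ} {b : Fin n → ℕ} : b ∈ excessLE n M ↔ ∑ j, (b j - 1) ≤ M := by
  refine ⟨fun h => (mem_filter.1 h).2, fun h => mem_filter.2 ⟨?_, h⟩⟩
  refine Fintype.mem_piFinset.2 fun j => mem_range.2 ?_
  have := single_le_sum (fun j _ => Nat.zero_le (b j - 1)) (mem_univ j)
  omega

theorem cons_mem_excessLE_iff {n M v : ℕ} {c : Fin n → ℕ} :
    Fin.cons v c ∈ excessLE (n + 1) M ↔ v < M + 2 ∧ c ∈ excessLE n (M - (v - 1)) := by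
  simp only [mem_excessLE, Fin.sum_univ_succ, Fin.cons_zero, Fin.cons_succ]
  omega

theorem sum_excessLE_succ {R : Type*} [AddCommMonoid R] (n M : ℕ) (f : (Fin (n + 1) → ℕ) → R) :
    ∑ b ∈ excessLE (n + 1) M, f b =
      ∑ v ∈ range (M + 2), ∑ c ∈ excessLE n (M - (v - 1)), f (Fin.cons v c) := by
  rw [← sum_sigma (range (M + 2)) (fun v => excessLE n (M - (v - 1)))
    fun p => f (Fin.cons p.1 p.2)]
  refine sum_nbij' (fun b => ⟨b 0, Fin.tail b⟩) (fun p => Fin.cons p.1 p.2) ?_ ?_ ?_ ?_ ?_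
  · intro b hb
    rw [← Fin.cons_self_tail b, cons_mem_excessLE_iff] at hb
    simpa using hb
  · rintro ⟨v, c⟩ hp
    simpa [cons_mem_excessLE_iff] using hp
  · intro b _
    exact Fin.cons_self_tail b
  · rintro ⟨v, c⟩ _
    simp
  · intro b _
    rw [Fin.cons_self_tail]

noncomputable def excessPoly (n M : ℕ) : ℤ[X] :=
  ∑ b ∈ excessLE n M, X ^ #{j | b j ≠ 0}

theorem excessPoly_zero (M : ℕ) : excessPoly 0 M = 1 := by
  simp [excessPoly, excessLE]

theorem excessPoly_succ (n M : ℕ) :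
    excessPoly (n + 1) M = excessPoly n M + X * ∑ d ∈ range (M + 1), excessPoly n (M - d) := by
  simp only [excessPoly, sum_excessLE_succ, Fin.card_filter_univ_succ', Fin.cons_zero,
    Fin.cons_succ, mul_sum, sum_range_succ' _ (M + 1)]
  simp [pow_add, add_comm]

theorem sum_range_tsub_add_choose (M l : ℕ) :
    ∑ d ∈ range (M + 1), (M - d + l).choose l = (M + l + 1).choose (l + 1) := by
  rw [← Nat.sum_range_add_choose, ← sum_range_reflect]
  exact sum_congr rfl fun d hd => by
    rw [Nat.add_sub_cancel, Nat.sub_sub_self (mem_range_succ_iff.1 hd)]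

theorem coeff_excessPoly (n M l : ℕ) :
    (excessPoly n M).coeff l = ((M + l).choose l * n.choose l : ℕ) := by
  induction n generalizing M l with
  | zero => cases l <;> simp [excessPoly_zero, coeff_one]
  | succ n ih =>
    rw [excessPoly_succ, coeff_add]
    cases l with
    | zero => simp [ih]
    | succ l =>
      simp only [coeff_X_mul, finsetSum_coeff, ih, ← Nat.cast_sum, ← sum_mul,
        sum_range_tsub_add_choose, Nat.choose_succ_succ' n l]
      push_cast
      ring_nf

theorem excessPoly_eq_sum (n M : ℕ) :
    excessPoly n M =
      ∑ l ∈ range (n + 1), C (((M + l).choose l * n.choose l : ℕ) : ℤ) * X ^ l := by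
  ext l
  simp only [coeff_excessPoly, finsetSum_coeff, coeff_C_mul_X_pow, sum_ite_eq, mem_range]
  split_ifs with hl
  · rfl
  · simp [Nat.choose_eq_zero_of_lt (not_lt.1 hl |>.trans_lt' (Nat.lt_succ_self n))]

end Excess

section OrdinalSum

variable {m n : ℕ}

theorem isOrderIdeal_ordinalSumRel_disjSum_iff {s : Finset (Fin m)} {t : Finset (Fin n)} :
    IsOrderIdeal (ordinalSumRel m n) (s.disjSum t) ↔ t = ∅ ∨ s = univ := by
  have : IsOrderIdeal (ordinalSumRel m n) (s.disjSum t) ↔ ∀ i j, j ∈ t → i ∈ s := by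
    constructor
    · intro h i j hj
      simpa using h (.inl i) (.inr j) (.inr ⟨rfl, rfl⟩) (by simpa using hj)
    · rintro h a b (rfl | ⟨ha, hb⟩) hmem
      · exact hmem
      · obtain ⟨i, rfl⟩ := Sum.isLeft_iff.1 ha
        obtain ⟨j, rfl⟩ := Sum.isRight_iff.1 hb
        simpa using h i j (by simpa using hmem)
  rw [this, eq_empty_iff_forall_notMem, eq_univ_iff_forall]
  grind

theorem forall_isOrderIdeal_ordinalSumRel_iff (x : Fin m ⊕ Fin n → ℕ) :
    (∀ I, IsOrderIdeal (ordinalSumRel m n) I → ∑ e ∈ I, x e ≤ #I) ↔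
      (∀ s : Finset (Fin m), ∑ i ∈ s, x (.inl i) ≤ #s) ∧
        ∀ t : Finset (Fin n), ∑ i, x (.inl i) + ∑ j ∈ t, x (.inr j) ≤ m + #t := by
  constructor
  · intro h
    refine ⟨fun s => ?_, fun t => ?_⟩
    · simpa using h (s.disjSum ∅) (isOrderIdeal_ordinalSumRel_disjSum_iff.2 (.inl rfl))
    · simpa using h (univ.disjSum t) (isOrderIdeal_ordinalSumRel_disjSum_iff.2 (.inr rfl))
  · rintro ⟨hs, ht⟩ I hI
    rw [← toLeft_disjSum_toRight (u := I), isOrderIdeal_ordinalSumRel_disjSum_iff] at hI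
    rw [← toLeft_disjSum_toRight (u := I), sum_disjSum, card_disjSum]
    rcases hI with hI | hI
    · simpa [hI] using hs I.toLeft
    · simpa [hI] using ht I.toRight

theorem natCast_mem_ordinalSumPolytope_iff (x : Fin m ⊕ Fin n → ℕ) :
    (fun e => (x e : ℝ)) ∈ preorderPolytope (Fin m ⊕ Fin n) (ordinalSumRel m n) ↔
      (∀ i, x (.inl i) ≤ 1) ∧ ∑ j, (x (.inr j) - 1) ≤ m - ∑ i, x (.inl i) := by
  rw [natCast_mem_preorderPolytope_iff, forall_isOrderIdeal_ordinalSumRel_iff,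
    forall_sum_le_card_iff]
  refine and_congr_right fun ha => forall_add_sum_le_add_card_iff _ ?_
  simpa using sum_le_card_nsmul univ (fun i => x (.inl i)) 1 fun i _ => ha i

theorem bijOn_ordinalSumPolytope :
    Set.BijOn (fun p : (_ : Finset (Fin m)) × (Fin n → ℕ) =>
        Sum.elim (fun i => if i ∈ p.1 then 1 else 0) p.2)
      ↑(univ.sigma fun s : Finset (Fin m) => excessLE n (m - #s))
      {x | (fun e => (x e : ℝ)) ∈ preorderPolytope (Fin m ⊕ Fin n) (ordinalSumRel m n)} := by
  refine ⟨?_, ?_, ?_⟩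
  · rintro ⟨s, b⟩ hp
    simp only [coe_sigma, Set.mem_sigma_iff, mem_coe, mem_univ, mem_excessLE, true_and] at hp
    simp only [Set.mem_ofPred_eq, natCast_mem_ordinalSumPolytope_iff, Sum.elim_inl,
      Sum.elim_inr, sum_boole, Nat.cast_id, filter_mem_eq_inter, univ_inter]
    exact ⟨fun i => by split_ifs <;> omega, hp⟩
  · rintro ⟨s, b⟩ _ ⟨s', b'⟩ _ h
    obtain rfl : s = s' := ext fun i => by
      have hi : (if i ∈ s then 1 else 0) = (if i ∈ s' then 1 else 0 : ℕ) := congrFun h (.inl i)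
      split_ifs at hi <;> simp_all
    obtain rfl : b = b' := funext fun j => congrFun h (.inr j)
    rfl
  · intro x hx
    obtain ⟨ha, hb⟩ := (natCast_mem_ordinalSumPolytope_iff x).1 hx
    refine ⟨⟨({i | x (.inl i) ≠ 0} : Finset _), fun j => x (.inr j)⟩, ?_, ?_⟩
    · simpa [mem_excessLE, ← sum_eq_card_filter_ne_zero_of_le_one ha] using hb
    · funext e
      rcases e with i | j
      · have := ha i
        simp only [Sum.elim_inl, mem_filter, mem_univ, true_and]
        split_ifs <;> omega
      · rfl

theorem finsum_ordinalSumPolytope_eq :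
    ∑ᶠ x ∈ {x : Fin m ⊕ Fin n → ℕ |
        (fun e => (x e : ℝ)) ∈ preorderPolytope (Fin m ⊕ Fin n) (ordinalSumRel m n)},
      (X : ℤ[X]) ^ #{e | x e ≠ 0} =
    ∑ s : Finset (Fin m), X ^ #s * excessPoly n (m - #s) := by
  rw [← finsum_mem_eq_of_bijOn _ bijOn_ordinalSumPolytope fun _ _ => rfl,
    finsum_mem_coe_finset, sum_sigma]
  simp [excessPoly, mul_sum, card_filter_sumElim_ne_zero, pow_add]

end OrdinalSum

/-- the lattice points of `Q_{τ_{m,n}}` are exactly the tuples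
`(a, b)` with all `a_i ∈ {0,1}` and `Σ_j max(b_j − 1, 0) ≤ m − Σ_i a_i`, and
consequently the `h`-polynomial equals
`Σ_{k,ℓ} C(m−k+ℓ, ℓ) C(m,k) C(n,ℓ) t^{k+ℓ}`. -/
theorem ordinal_sum_antichains (m n : ℕ) :
    (∀ x : Fin m ⊕ Fin n → ℕ,
      ((fun e => (x e : ℝ)) ∈ preorderPolytope (Fin m ⊕ Fin n) (ordinalSumRel m n) ↔
        (∀ i : Fin m, x (Sum.inl i) ≤ 1) ∧
          ∑ j : Fin n, (x (Sum.inr j) - 1) ≤ m - ∑ i : Fin m, x (Sum.inl i))) ∧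
    (∑ᶠ x ∈ {x : Fin m ⊕ Fin n → ℕ |
          (fun e => (x e : ℝ)) ∈ preorderPolytope (Fin m ⊕ Fin n) (ordinalSumRel m n)},
        (X : Polynomial ℤ) ^ (Finset.univ.filter (fun e => x e ≠ 0)).card) =
      ∑ k ∈ Finset.range (m + 1), ∑ l ∈ Finset.range (n + 1),
        Polynomial.C (((m - k + l).choose l * m.choose k * n.choose l : ℕ) : ℤ) *
          (X : Polynomial ℤ) ^ (k + l) := by
  refine ⟨natCast_mem_ordinalSumPolytope_iff, ?_⟩
  rw [finsum_ordinalSumPolytope_eq, ← powerset_univ,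
    sum_powerset_apply_card fun k => (X : ℤ[X]) ^ k * excessPoly n (m - k), card_univ,
    Fintype.card_fin]
  refine sum_congr rfl fun k _ => ?_
  rw [excessPoly_eq_sum, mul_sum, smul_sum]
  refine sum_congr rfl fun l _ => ?_
  simp only [nsmul_eq_mul, Nat.cast_mul, map_mul, map_natCast, pow_add]
  ring
end

section
/- For all nonnegative integers m, n: Σ_{k=0}^m Σ_{ℓ=0}^n C(m−k+ℓ, ℓ) C(m,k) C(n,ℓ) t^{k+ℓ} = Σ_{i≥0} C(m,i) C(n,i) t^i (1+t)^{m+n−2i}. In particular the left-hand side is a palindromic polynomial of degree m+n. -/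
/-!
Vandermonde's identity `C(r+l,l) = Σ_a C(r,a) C(l,a)` together with
`C(n,l) C(l,a) = C(n,a) C(n-a,l-a)` gives
`Σ_l C(r+l,l) C(n,l) t^l = Σ_a C(r,a) C(n,a) t^a (1+t)^(n-a)`.
Applied with `r = m-k` inside the sum over `k`, and after exchanging the sums, the `k`-sum
collapses by `C(m,k) C(m-k,a) = C(m,a) C(m-a,k)` to `C(m,a) (1+t)^(m-a)`.
Each `t^i (1+t)^(m+n-2i)` is palindromic of degree `m+n`, hence so is the whole sum.
-/

open Polynomial Finset

namespace Nat

theorem choose_mul_choose_sub_comm (n a b : ℕ) :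
    n.choose a * (n - a).choose b = n.choose b * (n - b).choose a := by
  rcases le_or_gt (a + b) n with h | h
  · have ha := choose_mul (n := n) (Nat.le_add_right a b)
    have hb := choose_mul (n := n) (Nat.le_add_left b a)
    rw [Nat.add_sub_cancel_left] at ha
    rw [Nat.add_sub_cancel] at hb
    rw [← ha, ← hb, choose_symm_add]
  · have hb : n.choose b * (n - b).choose a = 0 := by
      rcases le_or_gt b n with hb | hb
      · rw [choose_eq_zero_of_lt (show n - b < a by omega), mul_zero]
      · rw [choose_eq_zero_of_lt hb, zero_mul]
    rcases le_or_gt a n with ha | ha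
    · rw [hb, choose_eq_zero_of_lt (show n - a < b by omega), mul_zero]
    · rw [hb, choose_eq_zero_of_lt ha, zero_mul]

theorem sum_range_choose_mul_choose_of_le {l N : ℕ} (r : ℕ) (hl : l ≤ N) :
    ∑ a ∈ range (N + 1), r.choose a * l.choose a = (r + l).choose l := by
  have hsub : range (l + 1) ⊆ range (N + 1) := range_subset_range.mpr (by omega)
  rw [← sum_subset hsub fun a _ ha => by
    rw [choose_eq_zero_of_lt (show l < a by simpa using ha), mul_zero]]
  rw [add_choose_eq, Finset.Nat.sum_antidiagonal_eq_sum_range_succ_mk]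
  refine sum_congr rfl fun a ha => ?_
  rw [choose_symm (mem_range_succ_iff.mp ha)]

end Nat

namespace Polynomial

section Semiring

variable {R : Type*} [Semiring R]

theorem coeff_sum_range_C_mul_X_pow (c : ℕ → R) (N j : ℕ) :
    (∑ k ∈ range (N + 1), C (c k) * X ^ k).coeff j = if j ≤ N then c j else 0 := by
  simp

theorem sum_range_choose_mul_choose_sub_mul_X_pow (m a : ℕ) :
    ∑ k ∈ range (m + 1), C ((m.choose k * (m - k).choose a : ℕ) : R) * X ^ k =
      C (m.choose a : R) * (1 + X) ^ (m - a) := by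
  ext j
  rw [coeff_sum_range_C_mul_X_pow, coeff_C_mul, coeff_one_add_X_pow, ← Nat.cast_mul,
    Nat.choose_mul_choose_sub_comm]
  split_ifs with hj
  · rfl
  · rw [Nat.choose_eq_zero_of_lt (show m - a < j by omega), mul_zero, Nat.cast_zero]

theorem sum_range_add_choose_mul_choose_mul_X_pow (r n : ℕ) :
    ∑ l ∈ range (n + 1), C (((r + l).choose l * n.choose l : ℕ) : R) * X ^ l =
      ∑ a ∈ range (n + 1),
        C ((r.choose a * n.choose a : ℕ) : R) * X ^ a * (1 + X) ^ (n - a) := by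
  ext l
  have hterm (a : ℕ) :
      (C ((r.choose a * n.choose a : ℕ) : R) * X ^ a * (1 + X) ^ (n - a)).coeff l =
        ((n.choose l * (r.choose a * l.choose a) : ℕ) : R) := by
    rw [mul_assoc, coeff_C_mul, coeff_X_pow_mul', coeff_one_add_X_pow]
    split_ifs with ha
    · rw [← Nat.cast_mul, mul_assoc, ← Nat.choose_mul ha, Nat.mul_left_comm]
    · rw [Nat.choose_eq_zero_of_lt (show l < a by omega)]
      simp
  rw [coeff_sum_range_C_mul_X_pow, finsetSum_coeff]
  simp only [hterm, ← Nat.cast_sum, ← mul_sum]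
  split_ifs with hl
  · rw [Nat.sum_range_choose_mul_choose_of_le r hl, mul_comm]
  · rw [Nat.choose_eq_zero_of_lt (show n < l by omega), zero_mul, Nat.cast_zero]

theorem coeff_X_pow_mul_one_add_X_pow_sub_symm {a N i : ℕ} (ha : 2 * a ≤ N) (hi : i ≤ N) :
    (X ^ a * (1 + X) ^ (N - 2 * a) : R[X]).coeff (N - i) =
      (X ^ a * (1 + X) ^ (N - 2 * a) : R[X]).coeff i := by
  simp only [coeff_X_pow_mul', coeff_one_add_X_pow]
  split_ifs with h₁ h₂ h₂
  · rcases le_or_gt (i - a) (N - 2 * a) with hle | hlt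
    · rw [← Nat.choose_symm hle, show N - 2 * a - (i - a) = N - i - a by omega]
    · rw [Nat.choose_eq_zero_of_lt hlt, Nat.choose_eq_zero_of_lt (by omega)]
  · rw [Nat.choose_eq_zero_of_lt (by omega), Nat.cast_zero]
  · rw [Nat.choose_eq_zero_of_lt (by omega), Nat.cast_zero]
  · rfl

end Semiring

theorem sum_sum_choose_mul_X_pow_eq_sum_X_pow_mul_one_add_X_pow {R : Type*} [CommSemiring R]
    (m n : ℕ) :
    ∑ k ∈ range (m + 1), ∑ l ∈ range (n + 1),
        C (((m - k + l).choose l * m.choose k * n.choose l : ℕ) : R) * X ^ (k + l) =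
      ∑ i ∈ range (min m n + 1),
        C ((m.choose i * n.choose i : ℕ) : R) * X ^ i * (1 + X) ^ (m + n - 2 * i) := by
  calc _ = ∑ k ∈ range (m + 1), C (m.choose k : R) * X ^ k *
          ∑ l ∈ range (n + 1), C ((((m - k) + l).choose l * n.choose l : ℕ) : R) * X ^ l := by
        simp only [mul_sum, pow_add, Nat.cast_mul, C_mul]
        exact sum_congr rfl fun _ _ => sum_congr rfl fun _ _ => by ring
    _ = ∑ a ∈ range (n + 1), C (n.choose a : R) * X ^ a * (1 + X) ^ (n - a) *
          ∑ k ∈ range (m + 1), C ((m.choose k * (m - k).choose a : ℕ) : R) * X ^ k := by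
        simp only [sum_range_add_choose_mul_choose_mul_X_pow, mul_sum]
        rw [sum_comm]
        simp only [Nat.cast_mul, C_mul]
        exact sum_congr rfl fun _ _ => sum_congr rfl fun _ _ => by ring
    _ = ∑ a ∈ range (n + 1), C ((m.choose a * n.choose a : ℕ) : R) * X ^ a *
          ((1 + X) ^ (m - a) * (1 + X) ^ (n - a)) := by
        refine sum_congr rfl fun a _ => ?_
        rw [sum_range_choose_mul_choose_sub_mul_X_pow, Nat.cast_mul, C_mul]
        ring
    _ = _ := by
        refine (sum_subset (range_subset_range.mpr (by omega)) fun a ha ha' => ?_).symm.trans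
          (sum_congr rfl fun a ha => ?_)
        · rw [Nat.choose_eq_zero_of_lt (show m < a by rw [mem_range] at ha ha'; omega)]
          simp
        · rw [← pow_add, show m - a + (n - a) = m + n - 2 * a by rw [mem_range] at ha; omega]

end Polynomial

/-- the identity
`Σ_{k=0}^m Σ_{ℓ=0}^n C(m−k+ℓ,ℓ) C(m,k) C(n,ℓ) t^{k+ℓ}
  = Σ_i C(m,i) C(n,i) t^i (1+t)^{m+n−2i}`,
and consequently the left-hand side is palindromic of degree `m+n`. -/
theorem shuffle_h_polynomial_identity (m n : ℕ) :
    (∑ k ∈ Finset.range (m + 1), ∑ l ∈ Finset.range (n + 1),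
        Polynomial.C (((m - k + l).choose l * m.choose k * n.choose l : ℕ) : ℤ) *
          (X : Polynomial ℤ) ^ (k + l)) =
      (∑ i ∈ Finset.range (min m n + 1),
        Polynomial.C ((m.choose i * n.choose i : ℕ) : ℤ) *
          (X : Polynomial ℤ) ^ i * (1 + X) ^ (m + n - 2 * i)) ∧
    ∀ i ≤ m + n,
      (∑ k ∈ Finset.range (m + 1), ∑ l ∈ Finset.range (n + 1),
          Polynomial.C (((m - k + l).choose l * m.choose k * n.choose l : ℕ) : ℤ) *
            (X : Polynomial ℤ) ^ (k + l)).coeff i =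
        (∑ k ∈ Finset.range (m + 1), ∑ l ∈ Finset.range (n + 1),
          Polynomial.C (((m - k + l).choose l * m.choose k * n.choose l : ℕ) : ℤ) *
            (X : Polynomial ℤ) ^ (k + l)).coeff (m + n - i) := by
  refine ⟨sum_sum_choose_mul_X_pow_eq_sum_X_pow_mul_one_add_X_pow m n, fun i hi => ?_⟩
  rw [sum_sum_choose_mul_X_pow_eq_sum_X_pow_mul_one_add_X_pow, finsetSum_coeff, finsetSum_coeff]
  refine Finset.sum_congr rfl fun a ha => ?_
  rw [mul_assoc, coeff_C_mul, coeff_C_mul,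
    coeff_X_pow_mul_one_add_X_pow_sub_symm (by rw [mem_range] at ha; omega) hi]
end

section
/- The polynomial Σ_{i=0}^{min(m,n)} C(m,i) C(n,i) t^i has only real roots, and consequently h_{m,n}(t) = Σ_i C(m,i)C(n,i) t^i (1+t)^{m+n−2i} has only real roots. -/
/-!
By Rolle's theorem the `n`-th derivative of `tⁿ (1 + t)ᵐ`, which has only real roots, has only
real roots; by Leibniz's rule it equals `n! Σ C(m,i) C(n,i) tⁱ (1 + t)^(m-i) = n! (1 + t)ᵐ P(t / (1 + t))`
with `P(t) = Σ C(m,i) C(n,i) tⁱ`, and the real Möbius map `t ↦ t / (1 + t)` carries the real roots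
of the former onto the roots of `P`. Next `h(z) = (1 + z)^(m+n) P(z / (1 + z)²)`, and `P` has
positive coefficients, so a root `z ≠ -1` of `h` solves `r (1 + z)² = z` for some real `r < 0`:
a real quadratic with discriminant `1 - 4r > 0`.
-/

open Polynomial Finset
open scoped Nat

namespace Polynomial

theorem Splits.derivative_of_real {p : ℝ[X]} (hp : p.Splits) : (derivative p).Splits := by
  rw [splits_iff_card_roots] at hp ⊢
  have rolle := card_roots_le_derivative p
  have hdeg := natDegree_derivative_le p
  have hcard := card_roots' (derivative p)
  omega

theorem Splits.iterate_derivative_of_real {p : ℝ[X]} (hp : p.Splits) (k : ℕ) :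
    (derivative^[k] p).Splits := by
  induction k with
  | zero => exact hp
  | succ k ih => simpa only [Function.iterate_succ_apply'] using ih.derivative_of_real

theorem Splits.im_eq_zero_of_aeval_eq_zero {p : ℝ[X]} (hp : p.Splits) (hp0 : p ≠ 0) {z : ℂ}
    (hz : aeval z p = 0) : z.im = 0 := by
  obtain ⟨r, rfl⟩ := hp.mem_range_of_isRoot hp0 (i := algebraMap ℝ ℂ) (x := z)
    (by rwa [IsRoot, eval_map_algebraMap])
  exact Complex.ofReal_im r

end Polynomial

/-- The quadratic `r z² + (2r - 1) z + r` has discriminant `1 - 4r ≥ 0`. -/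
theorem Complex.im_eq_zero_of_ofReal_mul_one_add_sq_eq {r : ℝ} (hr : r ≤ 1 / 4) {z : ℂ}
    (h : r * (1 + z) ^ 2 = z) : z.im = 0 := by
  obtain ⟨hre, him⟩ := Complex.ext_iff.mp h
  simp only [pow_two, mul_re, mul_im, add_re, add_im, one_re, one_im, ofReal_re,
    ofReal_im] at hre him
  by_contra hb
  have hr' : 2 * r * (1 + z.re) = 1 := mul_left_cancel₀ hb (by linear_combination him)
  have hsq : 4 * (r * z.im) ^ 2 = 4 * r - 1 := by
    linear_combination (-(4 * r)) * hre + (2 * r * (1 + z.re) - 1) * hr'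
  have hrb : r * z.im = 0 := by nlinarith
  rcases mul_eq_zero.mp hrb with h0 | h0
  · simp [h0] at hr'
  · exact hb h0

theorem aeval_sum_C_mul_X_pow_mul_one_add_X_pow {R A : Type*} [CommRing R] [Field A]
    [Algebra R A] (s : Finset ℕ) (c : ℕ → R) (N k : ℕ) (hs : ∀ i ∈ s, k * i ≤ N) {z : A}
    (hz : 1 + z ≠ 0) :
    aeval z (∑ i ∈ s, C (c i) * X ^ i * (1 + X) ^ (N - k * i)) =
      (1 + z) ^ N * aeval (z / (1 + z) ^ k) (∑ i ∈ s, C (c i) * X ^ i) := by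
  simp only [map_sum, mul_sum, map_mul, aeval_C, aeval_X, map_pow, map_add, map_one]
  refine sum_congr rfl fun i hi => ?_
  rw [div_pow, ← pow_mul, ← pow_sub_mul_pow _ (hs i hi)]
  field_simp

noncomputable def shufflePoly (m n : ℕ) : ℝ[X] :=
  ∑ i ∈ range (min m n + 1), C ((m.choose i * n.choose i : ℕ) : ℝ) * X ^ i

noncomputable def rodriguesShufflePoly (R : Type*) [CommRing R] (m n : ℕ) : R[X] :=
  ∑ i ∈ range (min m n + 1), C ((m.choose i * n.choose i : ℕ) : R) * X ^ i * (1 + X) ^ (m - i)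

theorem iterate_derivative_X_pow_mul_one_add_X_pow {R : Type*} [CommRing R] (m n : ℕ) :
    derivative^[n] ((X : R[X]) ^ n * (1 + X) ^ m) = C (n ! : R) * rodriguesShufflePoly R m n := by
  have hterm : ∀ i ∈ range (n + 1),
      n.choose i • (derivative^[n - i] ((X : R[X]) ^ n) * derivative^[i] ((1 + X) ^ m)) =
        C (n ! : R) * (C ((m.choose i * n.choose i : ℕ) : R) * X ^ i * (1 + X) ^ (m - i)) := by
    intro i hi
    have hin : i ≤ n := Nat.lt_succ_iff.mp (mem_range.mp hi)
    have hcoeff : n.choose i * (n.descFactorial (n - i) * m.descFactorial i) =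
        n ! * (m.choose i * n.choose i) := by
      have h := Nat.factorial_mul_descFactorial (Nat.sub_le n i)
      rw [Nat.sub_sub_self hin] at h
      rw [Nat.descFactorial_eq_factorial_mul_choose m i, ← h]
      ring
    rw [add_comm (1 : R[X]), ← C_1, iterate_derivative_X_pow_eq_C_mul,
      iterate_derivative_X_add_pow, Nat.sub_sub_self hin, nsmul_eq_mul, nsmul_eq_mul,
      ← C_eq_natCast, ← C_eq_natCast]
    have hC : C (n.choose i : R) * C (n.descFactorial (n - i) : R) * C (m.descFactorial i : R) =
        C (n ! : R) * C ((m.choose i * n.choose i : ℕ) : R) := by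
      simp only [← C_mul, ← Nat.cast_mul, ← hcoeff, mul_assoc]
    linear_combination (X ^ i * (X + C 1) ^ (m - i)) * hC
  rw [iterate_derivative_mul, sum_congr rfl hterm, ← mul_sum, rodriguesShufflePoly]
  congr 1
  refine (sum_subset (range_subset_range.mpr (by omega)) fun i hi hi' => ?_).symm
  have hmi : m < i := by simp only [mem_range] at hi hi'; omega
  simp [Nat.choose_eq_zero_of_lt hmi]

theorem rodriguesShufflePoly_splits (m n : ℕ) : (rodriguesShufflePoly ℝ m n).Splits := by
  have hF : ((X : ℝ[X]) ^ n * (1 + X) ^ m).Splits := by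
    rw [add_comm, ← C_1]
    exact (Splits.X_pow n).mul ((Splits.X_add_C 1).pow m)
  have h := hF.iterate_derivative_of_real n
  rwa [iterate_derivative_X_pow_mul_one_add_X_pow,
    splits_mul_iff_right (by simp [Nat.factorial_ne_zero]) (Splits.C _)] at h

theorem aeval_rodriguesShufflePoly (m n : ℕ) {t : ℂ} (ht : 1 + t ≠ 0) :
    aeval t (rodriguesShufflePoly ℝ m n) = (1 + t) ^ m * aeval (t / (1 + t)) (shufflePoly m n) := by
  have h := aeval_sum_C_mul_X_pow_mul_one_add_X_pow (range (min m n + 1))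
    (fun i => ((m.choose i * n.choose i : ℕ) : ℝ)) m 1
    (fun i hi => by simp only [mem_range] at hi; omega) ht
  simp only [one_mul, pow_one] at h
  exact h

theorem aeval_ofReal_shufflePoly_ne_zero (m n : ℕ) {r : ℝ} (hr : 0 ≤ r) :
    aeval (r : ℂ) (shufflePoly m n) ≠ 0 := by
  rw [← Complex.coe_algebraMap, aeval_algebraMap_apply_eq_algebraMap_eval,
    Complex.coe_algebraMap, Complex.ofReal_ne_zero, shufflePoly, eval_finsetSum]
  refine (sum_pos' (fun i _ => ?_) ⟨0, by simp, by simp⟩).ne'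
  simp only [eval_mul, eval_C, eval_pow, eval_X]
  positivity

theorem rodriguesShufflePoly_ne_zero (m n : ℕ) : rodriguesShufflePoly ℝ m n ≠ 0 := fun h => by
  have h0 := aeval_rodriguesShufflePoly m n (t := 0) (by norm_num)
  rw [h, map_zero, zero_div, ← Complex.ofReal_zero] at h0
  exact aeval_ofReal_shufflePoly_ne_zero m n le_rfl (by simpa using h0.symm)

theorem im_eq_zero_of_aeval_shufflePoly_eq_zero {m n : ℕ} {z : ℂ}
    (hz : aeval z (shufflePoly m n) = 0) : z.im = 0 := by
  have hz1 : 1 - z ≠ 0 := by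
    intro h
    rw [← eq_of_sub_eq_zero h, ← Complex.ofReal_one] at hz
    exact aeval_ofReal_shufflePoly_ne_zero m n zero_le_one hz
  have ht1 : 1 + z / (1 - z) = (1 - z)⁻¹ := by field_simp; ring
  have htz : z / (1 - z) / (1 + z / (1 - z)) = z := by rw [ht1]; field_simp
  have ht : (z / (1 - z)).im = 0 :=
    (rodriguesShufflePoly_splits m n).im_eq_zero_of_aeval_eq_zero
      (rodriguesShufflePoly_ne_zero m n)
      (by rw [aeval_rodriguesShufflePoly m n (ht1 ▸ inv_ne_zero hz1), htz, hz, mul_zero])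
  rw [← htz]
  simp [Complex.div_im, ht]

/-- the polynomial `Σ_i C(m,i) C(n,i) t^i` has only real roots,
and consequently so does
`h_{m,n}(t) = Σ_i C(m,i) C(n,i) t^i (1+t)^{m+n−2i}`. -/
theorem shuffle_polynomials_real_rooted (m n : ℕ) :
    (∀ z : ℂ,
      Polynomial.aeval z
          (∑ i ∈ Finset.range (min m n + 1),
            Polynomial.C ((m.choose i * n.choose i : ℕ) : ℝ) * (X : Polynomial ℝ) ^ i) = 0 →
        z.im = 0) ∧
    (∀ z : ℂ,
      Polynomial.aeval z
          (∑ i ∈ Finset.range (min m n + 1),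
            Polynomial.C ((m.choose i * n.choose i : ℕ) : ℝ) * (X : Polynomial ℝ) ^ i *
              (1 + X) ^ (m + n - 2 * i)) = 0 →
        z.im = 0) := by
  refine ⟨fun z hz => im_eq_zero_of_aeval_shufflePoly_eq_zero hz, fun z hz => ?_⟩
  rcases eq_or_ne (1 + z) 0 with hz1 | hz1
  · simp [eq_neg_of_add_eq_zero_right hz1]
  have hw : aeval (z / (1 + z) ^ 2) (shufflePoly m n) = 0 := by
    have h := aeval_sum_C_mul_X_pow_mul_one_add_X_pow (range (min m n + 1))
      (fun i => ((m.choose i * n.choose i : ℕ) : ℝ)) (m + n) 2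
      (fun i hi => by simp only [mem_range] at hi; omega) hz1
    rw [hz, eq_comm, mul_eq_zero] at h
    exact h.resolve_left (pow_ne_zero _ hz1)
  obtain ⟨r, hr⟩ : ∃ r : ℝ, (r : ℂ) = z / (1 + z) ^ 2 :=
    ⟨_, Complex.ext rfl (im_eq_zero_of_aeval_shufflePoly_eq_zero hw).symm⟩
  have hr_neg : r < 0 := by
    by_contra! h
    exact aeval_ofReal_shufflePoly_ne_zero m n h (hr ▸ hw)
  refine Complex.im_eq_zero_of_ofReal_mul_one_add_sq_eq (r := r) (by linarith) ?_
  rw [hr]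
  field_simp
end

section
/- For every preorder τ on a finite set E, every point of the finite set V_τ consisting of the vectors −e_e (e ∈ E) and Σ_{e∈I} e_e for nonempty order ideals I of τ is a vertex of the convex hull R_τ^∨ = conv(V_τ), and R_τ^∨ contains no lattice points other than the origin and the points of V_τ. -/
/-- The set `V_τ` of the vectors `−e_e` (`e ∈ E`) and the indicator vectors
of the nonempty order ideals of `τ`. -/
def Vtau (E : Type*) [Fintype E] [DecidableEq E] (r : E → E → Prop) : Set (E → ℝ) :=
  {v | ∃ e : E, v = -Pi.single e 1} ∪
    {v | ∃ I : Finset E, I.Nonempty ∧ IsOrderIdeal r I ∧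
      v = fun e => if e ∈ I then (1 : ℝ) else 0}

/-!
Each point of `V_τ` is the unique maximiser over `V_τ` of a linear functional: `-v a` for
`v = -e_a`, and `v ↦ 2 ∑_{i ∈ I} v i - ∑_{i ∉ I} v i` for the indicator vector of `I`; a unique
maximiser over a set is an extreme point of its convex hull. For lattice points, `R_τ^∨` lies in
the cube `[-1, 1]^E`; a point with a coordinate `-1` lies on the face exposed by `-v a`, hence is
`-e_a`; a `0/1`-point is the indicator vector of its support, which is an order ideal because
`2 v b - v a ≤ 1` holds on `V_τ`, hence on `R_τ^∨`, whenever `r a b`.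
-/

section StrictMaximum

variable {𝕜 F : Type*} [Field 𝕜] [LinearOrder 𝕜] [IsStrictOrderedRing 𝕜]
  [AddCommGroup F] [Module 𝕜 F] (ℓ : F →ₗ[𝕜] 𝕜)

theorem LinearMap.apply_lt_of_mem_openSegment {c : 𝕜} {p y z : F}
    (hp : p ∈ openSegment 𝕜 y z) (hy : ℓ y < c) (hz : ℓ z ≤ c) : ℓ p < c := by
  obtain ⟨a, b, ha, hb, hab, rfl⟩ := hp
  rw [map_add, map_smul, map_smul, smul_eq_mul, smul_eq_mul]
  calc a * ℓ y + b * ℓ z < a * c + b * c :=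
        add_lt_add_of_lt_of_le (mul_lt_mul_of_pos_left hy ha) (mul_le_mul_of_nonneg_left hz hb.le)
    _ = c := by rw [← add_mul, hab, one_mul]

theorem LinearMap.convex_insert_setOf_lt (x : F) :
    Convex 𝕜 (insert x {y | ℓ y < ℓ x}) := by
  have hle : ∀ y ∈ insert x {y | ℓ y < ℓ x}, ℓ y ≤ ℓ x := by
    rintro y (rfl | hy)
    exacts [le_rfl, le_of_lt hy]
  rw [convex_iff_openSegment_subset]
  rintro y hy z hz p hp
  by_cases hyx : y = x
  · by_cases hzx : z = x
    · subst hyx hzx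
      rw [openSegment_same, Set.mem_singleton_iff] at hp
      exact hp ▸ hy
    · exact Or.inr <| ℓ.apply_lt_of_mem_openSegment (openSegment_symm 𝕜 y z ▸ hp)
        (hz.resolve_left hzx) (hle y hy)
  · exact Or.inr <| ℓ.apply_lt_of_mem_openSegment hp (hy.resolve_left hyx) (hle z hz)

theorem LinearMap.mem_extremePoints_insert_setOf_lt (x : F) :
    x ∈ (insert x {y | ℓ y < ℓ x}).extremePoints 𝕜 := by
  refine ⟨Set.mem_insert x _, fun y hy z hz hx => ?_⟩
  by_contra hyx
  have hz' : ℓ z ≤ ℓ x := by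
    rcases hz with rfl | hz
    exacts [le_rfl, le_of_lt hz]
  exact lt_irrefl _ (ℓ.apply_lt_of_mem_openSegment hx (hy.resolve_left hyx) hz')

theorem LinearMap.convexHull_subset_insert_setOf_lt {S : Set F} {x : F}
    (hS : ∀ y ∈ S, y ≠ x → ℓ y < ℓ x) : convexHull 𝕜 S ⊆ insert x {y | ℓ y < ℓ x} :=
  convexHull_min (fun y hy => (eq_or_ne y x).imp_right (hS y hy)) (ℓ.convex_insert_setOf_lt x)

theorem LinearMap.mem_extremePoints_convexHull {S : Set F} {x : F} (hx : x ∈ S)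
    (hS : ∀ y ∈ S, y ≠ x → ℓ y < ℓ x) : x ∈ (convexHull 𝕜 S).extremePoints 𝕜 :=
  inter_extremePoints_subset_extremePoints_of_subset (ℓ.convexHull_subset_insert_setOf_lt hS)
    ⟨subset_convexHull 𝕜 S hx, ℓ.mem_extremePoints_insert_setOf_lt x⟩

end StrictMaximum

theorem sum_ite_mem_two_neg_one_lt {E : Type*} [DecidableEq E] {I J : Finset E} (hJI : J ≠ I) :
    ∑ e ∈ J, (if e ∈ I then (2 : ℝ) else -1) < 2 * I.card := by
  rw [Finset.sum_ite, Finset.filter_mem_eq_inter, Finset.filter_notMem_eq_sdiff]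
  simp only [Finset.sum_const, nsmul_eq_mul]
  rcases (J \ I).eq_empty_or_nonempty with hJ | hJ
  · have hsub := Finset.sdiff_eq_empty_iff_subset.1 hJ
    have hlt : J.card < I.card := Finset.card_lt_card (Finset.ssubset_iff_subset_ne.2 ⟨hsub, hJI⟩)
    rw [hJ, Finset.inter_eq_left.2 hsub, Finset.card_empty]
    have : (J.card : ℝ) < I.card := by exact_mod_cast hlt
    linarith
  · have h1 : ((J ∩ I).card : ℝ) ≤ I.card := by
      exact_mod_cast Finset.card_le_card Finset.inter_subset_right
    have h2 : (1 : ℝ) ≤ (J \ I).card := by exact_mod_cast hJ.card_pos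
    linarith

section Vtau

variable {E : Type*} [Fintype E] [DecidableEq E] {r : E → E → Prop}

theorem convexHull_Vtau_subset_Icc : convexHull ℝ (Vtau E r) ⊆ Set.Icc (-1) 1 := by
  refine convexHull_min ?_ (convex_Icc _ _)
  rintro v (⟨g, rfl⟩ | ⟨J, -, -, rfl⟩) <;> refine ⟨fun e => ?_, fun e => ?_⟩ <;>
    simp only [Pi.neg_apply, Pi.one_apply, Pi.single_apply] <;> split_ifs <;> norm_num

theorem neg_proj_lt_of_mem_Vtau {a : E} {v : E → ℝ} (hv : v ∈ Vtau E r)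
    (hva : v ≠ -Pi.single a 1) :
    (-LinearMap.proj a : (E → ℝ) →ₗ[ℝ] ℝ) v <
      (-LinearMap.proj a : (E → ℝ) →ₗ[ℝ] ℝ) (-Pi.single a 1) := by
  suffices -1 < v a by simpa [neg_lt]
  rcases hv with ⟨g, rfl⟩ | ⟨J, -, -, rfl⟩
  · have hga : a ≠ g := fun h => hva (h ▸ rfl)
    simp [hga]
  · dsimp only
    split_ifs <;> norm_num

theorem neg_single_mem_extremePoints_convexHull_Vtau (a : E) :
    -Pi.single a 1 ∈ (convexHull ℝ (Vtau E r)).extremePoints ℝ :=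
  LinearMap.mem_extremePoints_convexHull _ (Or.inl ⟨a, rfl⟩) fun _ => neg_proj_lt_of_mem_Vtau

theorem eq_neg_single_of_mem_convexHull_Vtau {a : E} {y : E → ℝ}
    (hy : y ∈ convexHull ℝ (Vtau E r)) (hya : y a ≤ -1) : y = -Pi.single a 1 := by
  refine (LinearMap.convexHull_subset_insert_setOf_lt _
    (fun _ => neg_proj_lt_of_mem_Vtau) hy).resolve_right fun hlt => ?_
  simp only [Set.mem_ofPred_eq, LinearMap.neg_apply, LinearMap.coe_proj, Function.eval,
    Pi.neg_apply, Pi.single_eq_same] at hlt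
  linarith

theorem linearCombination_indicator (w : E → ℝ) (J : Finset E) :
    Fintype.linearCombination ℝ w (fun e => if e ∈ J then 1 else 0) = ∑ e ∈ J, w e := by
  simp [Fintype.linearCombination_apply, Finset.sum_ite_mem]

theorem indicator_mem_extremePoints_convexHull_Vtau {I : Finset E} (hI : I.Nonempty)
    (hIr : IsOrderIdeal r I) :
    (fun e => if e ∈ I then (1 : ℝ) else 0) ∈ (convexHull ℝ (Vtau E r)).extremePoints ℝ := by
  refine (Fintype.linearCombination ℝ fun e => if e ∈ I then (2 : ℝ) else -1
    ).mem_extremePoints_convexHull (Or.inr ⟨I, hI, hIr, rfl⟩) ?_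
  have hI1 : (1 : ℝ) ≤ I.card := by exact_mod_cast hI.card_pos
  have hmax : ∑ e ∈ I, (if e ∈ I then (2 : ℝ) else -1) = 2 * I.card := by
    rw [Finset.sum_ite_of_true fun _ => id, Finset.sum_const, nsmul_eq_mul, mul_comm]
  rintro v (⟨g, rfl⟩ | ⟨J, -, -, rfl⟩) hv
  · rw [linearCombination_indicator, hmax]
    simp only [map_neg, Fintype.linearCombination_apply_single, one_smul]
    split_ifs <;> linarith
  · rw [linearCombination_indicator, linearCombination_indicator, hmax]
    exact sum_ite_mem_two_neg_one_lt fun hJI => hv (hJI ▸ rfl)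

theorem two_mul_sub_le_one_of_mem_convexHull_Vtau {a b : E} (hab : r a b) {y : E → ℝ}
    (hy : y ∈ convexHull ℝ (Vtau E r)) : 2 * y b - y a ≤ 1 := by
  have hlin : IsLinearMap ℝ fun y : E → ℝ => 2 * y b - y a :=
    ⟨fun y z => by simp; ring, fun c y => by simp; ring⟩
  refine convexHull_min ?_ (convex_halfSpace_le hlin 1) hy
  rintro v (⟨g, rfl⟩ | ⟨J, -, hJ, rfl⟩)
  · simp only [Set.mem_ofPred_eq, Pi.neg_apply, Pi.single_apply]
    split_ifs <;> norm_num
  · by_cases hb : b ∈ J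
    · simp [hb, hJ a b hab hb]
      norm_num
    · by_cases ha : a ∈ J <;> simp [hb, ha]

theorem isOrderIdeal_of_indicator_mem_convexHull_Vtau {P : Finset E}
    (hP : (fun e => if e ∈ P then (1 : ℝ) else 0) ∈ convexHull ℝ (Vtau E r)) :
    IsOrderIdeal r P := fun a b hab hb => by
  by_contra ha
  have := two_mul_sub_le_one_of_mem_convexHull_Vtau hab hP
  simp only [hb, ha] at this
  norm_num at this

end Vtau

theorem Vtau_vertices_and_lattice_points_general (E : Type*) [Fintype E] [DecidableEq E]
    (r : E → E → Prop) :
    (∀ v ∈ Vtau E r, v ∈ Set.extremePoints ℝ (convexHull ℝ (Vtau E r))) ∧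
    (∀ x : E → ℤ, (fun e => (x e : ℝ)) ∈ convexHull ℝ (Vtau E r) →
      x = 0 ∨ (fun e => (x e : ℝ)) ∈ Vtau E r) := by
  refine ⟨?_, fun x hx => ?_⟩
  · rintro v (⟨a, rfl⟩ | ⟨I, hI, hIr, rfl⟩)
    exacts [neg_single_mem_extremePoints_convexHull_Vtau a,
      indicator_mem_extremePoints_convexHull_Vtau hI hIr]
  have hcube : ∀ e, -1 ≤ x e ∧ x e ≤ 1 := fun e => by
    have hlo := (convexHull_Vtau_subset_Icc hx).1 e
    have hhi := (convexHull_Vtau_subset_Icc hx).2 e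
    simp only [Pi.neg_apply, Pi.one_apply] at hlo hhi
    exact ⟨by exact_mod_cast hlo, by exact_mod_cast hhi⟩
  by_cases hneg : ∃ a, x a = -1
  · obtain ⟨a, ha⟩ := hneg
    rw [eq_neg_single_of_mem_convexHull_Vtau hx (a := a) (by simp [ha])]
    exact Or.inr (Or.inl ⟨a, rfl⟩)
  set P := Finset.univ.filter fun e => x e = 1
  have hxP : (fun e => (x e : ℝ)) = fun e => if e ∈ P then 1 else 0 := by
    ext e
    have := hcube e
    have : x e ≠ -1 := fun h => hneg ⟨e, h⟩
    by_cases h : x e = 1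
    · simp [P, h]
    · simp only [P, Finset.mem_filter, Finset.mem_univ, true_and, h, if_false, Int.cast_eq_zero]
      omega
  rcases P.eq_empty_or_nonempty with hP | hP
  · left
    ext e
    simpa [hP] using congrFun hxP e
  · rw [hxP] at hx ⊢
    exact Or.inr (Or.inr ⟨P, hP, isOrderIdeal_of_indicator_mem_convexHull_Vtau hx, rfl⟩)

/-- every point of `V_τ` is a vertex (extreme point) of the
convex hull `R_τ^∨ = conv(V_τ)`, and `R_τ^∨` contains no lattice points other
than the origin and the points of `V_τ`. -/
theorem Vtau_vertices_and_lattice_points (E : Type*) [Fintype E] [DecidableEq E]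
    [Nonempty E]
    (r : E → E → Prop) (hrefl : ∀ a, r a a) (htrans : ∀ a b c, r a b → r b c → r a c) :
    (∀ v ∈ Vtau E r, v ∈ Set.extremePoints ℝ (convexHull ℝ (Vtau E r))) ∧
    (∀ x : E → ℤ, (fun e => (x e : ℝ)) ∈ convexHull ℝ (Vtau E r) →
      x = 0 ∨ (fun e => (x e : ℝ)) ∈ Vtau E r) :=
  Vtau_vertices_and_lattice_points_general E r
end
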